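/- arXiv:2008.03754 — 6 statements merged into one kernel-verified Lean document; each statement's English description precedes it below -/
import Mathlib

section
/- Let φ : (0,∞) → ℝ be bounded and measurable, K : (0,∞) → [0,∞) integrable, and ψ : (0,∞) → ℝ nonincreasing, right-continuous, with ψ(t) → 0 as t → +∞. If φ(t) ≤ ∫_t^∞ K(s)φ(s) ds + ψ(t) for a.e. t > 0, then φ(t) ≤ ∫_{(t,∞)} exp( ∫_t^s K(r) dr ) dν(s) for a.e. t > 0, where ν is the Lebesgue–Stieltjes measure associated with the nondecreasing function −ψ. -/
open MeasureTheory Set Real Filter Topology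

namespace GronwallAux

noncomputable def prim (Kb : ℝ → ℝ) : ℝ → ℝ := fun t => ∫ x in (0:ℝ)..t, Kb x

variable {Kb : ℝ → ℝ}

theorem prim_sub (hi : Integrable Kb) {a b : ℝ} (hab : a ≤ b) :
    prim Kb b - prim Kb a = ∫ x in Ioc a b, Kb x := by
  have h := intervalIntegral.integral_add_adjacent_intervals
    (hi.intervalIntegrable (a := 0) (b := a)) (hi.intervalIntegrable (a := a) (b := b))
  rw [← intervalIntegral.integral_of_le hab, prim, prim, ← h]
  ring

theorem prim_zero : prim Kb 0 = 0 := intervalIntegral.integral_same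

theorem prim_mono (h0 : ∀ x, 0 ≤ Kb x) (hi : Integrable Kb) : Monotone (prim Kb) := by
  intro a b hab
  have h := prim_sub hi hab
  have : 0 ≤ ∫ x in Ioc a b, Kb x := setIntegral_nonneg measurableSet_Ioc fun x _ => h0 x
  linarith

theorem prim_cont (hi : Integrable Kb) : Continuous (prim Kb) :=
  intervalIntegral.continuous_primitive (fun _ _ => hi.intervalIntegrable) 0

theorem prim_ae_deriv (hm : Measurable Kb) (h0 : ∀ x, 0 ≤ Kb x) (hi : Integrable Kb) :
    ∀ᵐ x, HasDerivAt (prim Kb) (Kb x) x := by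
  set S : StieltjesFunction ℝ :=
    { toFun := prim Kb
      mono' := prim_mono h0 hi
      right_continuous' := fun x => ((prim_cont hi).continuousAt).continuousWithinAt }
  have hSm : S.measure = volume.withDensity (fun x => ENNReal.ofReal (Kb x)) := by
    refine Measure.ext_of_Ioc _ _ (fun a b hab => ?_)
    rw [S.measure_Ioc, withDensity_apply _ measurableSet_Ioc,
      ← ofReal_integral_eq_lintegral_ofReal hi.integrableOn
        (Filter.Eventually.of_forall fun x => h0 x)]
    congr 1
    exact prim_sub hi hab.le
  have h1 := S.ae_hasDerivAt
  have h2 : S.measure.rnDeriv volume =ᵐ[volume] fun x => ENNReal.ofReal (Kb x) := by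
    rw [hSm]
    exact Measure.rnDeriv_withDensity volume (ENNReal.measurable_ofReal.comp hm)
  filter_upwards [h1, h2] with x hx he
  rw [he] at hx
  simpa [ENNReal.toReal_ofReal (h0 x)] using hx

theorem key_exp (hm : Measurable Kb) (h0 : ∀ x, 0 ≤ Kb x) (hi : Integrable Kb)
    {t u : ℝ} (htu : t ≤ u) :
    ∫ s in Ioc t u, Kb s * exp (-(prim Kb s)) ≤ exp (-(prim Kb t)) - exp (-(prim Kb u)) := by
  set A := prim Kb with hA
  obtain ⟨N, hNsub, hNmeas, hNnull⟩ :=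
    exists_measurable_superset_of_null (ae_iff.1 (prim_ae_deriv hm h0 hi))
  set P : Set ℝ := {x | 0 < Kb x} with hP
  have hPmeas : MeasurableSet P := measurableSet_lt measurable_const hm
  set s₀ : Set ℝ := (Ioo t u ∩ P) \ N with hs₀
  have hs₀meas : MeasurableSet s₀ := (measurableSet_Ioo.inter hPmeas).diff hNmeas
  have hderivAt : ∀ x ∈ s₀, HasDerivAt A (Kb x) x := by
    intro x hx
    by_contra hcon
    exact hx.2 (hNsub hcon)
  have hderiv : ∀ x ∈ s₀, HasDerivWithinAt A (Kb x) s₀ x :=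
    fun x hx => (hderivAt x hx).hasDerivWithinAt
  have hinj : InjOn A s₀ := by
    have key : ∀ x ∈ s₀, ∀ y ∈ s₀, x < y → A x < A y := by
      intro x hx y hy hxy
      have hd := hderivAt x hx
      rw [hasDerivAt_iff_tendsto_slope] at hd
      have hd' : Tendsto (slope A x) (𝓝[>] x) (𝓝 (Kb x)) :=
        hd.mono_left (nhdsWithin_mono x fun z hz => ne_of_gt hz)
      have hev : ∀ᶠ w in 𝓝[>] x, 0 < slope A x w := hd'.eventually (lt_mem_nhds hx.1.2)
      have hev2 : ∀ᶠ w in 𝓝[>] x, w < y :=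
        eventually_nhdsWithin_of_eventually_nhds (isOpen_Iio.eventually_mem hxy)
      obtain ⟨w, hw1, hw2, hw3⟩ := (hev.and (hev2.and self_mem_nhdsWithin)).exists
      have hAxw : A x < A w := by
        have := hw1
        rw [slope_def_field] at this
        have hwx : (0:ℝ) < w - x := sub_pos.2 hw3
        have h1 : 0 < (A w - A x) / (w - x) := by
          simpa [div_eq_div_iff, sub_div] using this
        nlinarith [mul_pos h1 hwx, div_mul_cancel₀ (A w - A x) (ne_of_gt hwx)]
      exact lt_of_lt_of_le hAxw (prim_mono h0 hi hw2.le)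
    intro x hx y hy hxy
    rcases lt_trichotomy x y with h | h | h
    · exact absurd hxy (ne_of_lt (key x hx y hy h))
    · exact h
    · exact absurd hxy.symm (ne_of_lt (key y hy x hx h))
  have hInt : IntegrableOn (fun s => Kb s * exp (-(A s))) (Ioo t u) := by
    refine Integrable.mono' ((hi.integrableOn).mul_const (exp (-(A t)))) ?_ ?_
    · exact ((hm.mul ((Real.continuous_exp.comp (prim_cont hi).neg).measurable)).aestronglyMeasurable)
    · filter_upwards [ae_restrict_mem measurableSet_Ioo] with x hx
      have h1 : A t ≤ A x := prim_mono h0 hi hx.1.le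
      have h2 : exp (-(A x)) ≤ exp (-(A t)) := exp_le_exp.2 (by linarith)
      have h3 : 0 ≤ Kb x * exp (-(A x)) := mul_nonneg (h0 x) (exp_pos _).le
      rw [Real.norm_eq_abs, abs_of_nonneg h3]
      exact mul_le_mul_of_nonneg_left h2 (h0 x)
  calc ∫ s in Ioc t u, Kb s * exp (-(A s))
      = ∫ s in Ioo t u, Kb s * exp (-(A s)) := integral_Ioc_eq_integral_Ioo
    _ = (∫ s in Ioo t u ∩ P, Kb s * exp (-(A s)))
        + ∫ s in Ioo t u \ P, Kb s * exp (-(A s)) :=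
        (integral_inter_add_diff hPmeas hInt).symm
    _ = ∫ s in Ioo t u ∩ P, Kb s * exp (-(A s)) := by
        have : ∫ s in Ioo t u \ P, Kb s * exp (-(A s)) = 0 := by
          rw [setIntegral_congr_fun (measurableSet_Ioo.diff hPmeas)
            (g := fun _ => (0:ℝ)) ?_]
          · simp
          · intro x hx
            have : Kb x = 0 := le_antisymm (not_lt.1 hx.2) (h0 x)
            simp [this]
        rw [this, add_zero]
    _ = ∫ s in s₀, Kb s * exp (-(A s)) :=
        (setIntegral_congr_set (diff_null_ae_eq_self hNnull)).symm
    _ = ∫ s in s₀, |Kb s| • exp (-(A s)) := by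
        refine setIntegral_congr_fun hs₀meas fun x _ => ?_
        rw [smul_eq_mul, abs_of_nonneg (h0 x)]
    _ = ∫ y in A '' s₀, exp (-y) :=
        (integral_image_eq_integral_abs_deriv_smul hs₀meas hderiv hinj (fun y => exp (-y))).symm
    _ ≤ ∫ y in Icc (A t) (A u), exp (-y) := by
        refine setIntegral_mono_set (Continuous.integrableOn_Icc (by continuity)) ?_ ?_
        · filter_upwards with y using (exp_pos _).le
        · refine (HasSubset.Subset.eventuallyLE ?_)
          rintro y ⟨x, hx, rfl⟩
          exact ⟨prim_mono h0 hi hx.1.1.1.le, prim_mono h0 hi hx.1.1.2.le⟩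
    _ = exp (-(A t)) - exp (-(A u)) := by
        rw [integral_Icc_eq_integral_Ioc, ← intervalIntegral.integral_of_le
          (prim_mono h0 hi htu)]
        have : ∀ y ∈ uIcc (A t) (A u), HasDerivAt (fun z => -exp (-z)) (exp (-y)) y := by
          intro y _
          have h1 : HasDerivAt (fun z : ℝ => -z) (-1) y := (hasDerivAt_id y).neg
          have h2 := (Real.hasDerivAt_exp (-y)).comp y h1
          have h3 := h2.neg
          simp only [mul_neg, mul_one, neg_neg] at h3
          exact h3
        rw [intervalIntegral.integral_eq_sub_of_hasDerivAt this
          ((Real.continuous_exp.comp continuous_neg).intervalIntegrable _ _)]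
        ring

end GronwallAux

section Main

open GronwallAux

/-- **Generalized Gronwall lemma.**
Let `φ : (0,∞) → ℝ` be bounded and measurable, `K : (0,∞) → [0,∞)` integrable, and
`ψ` nonincreasing, right-continuous, vanishing at `+∞` (encoded by requiring that `-ψ`
is a Stieltjes function `F`, with associated Lebesgue–Stieltjes measure `ν = F.measure`).
If `φ(t) ≤ ∫_t^∞ K(s) φ(s) ds + ψ(t)` for a.e. `t > 0`, then
`φ(t) ≤ ∫_{(t,∞)} exp(∫_t^s K(r) dr) dν(s)` for a.e. `t > 0`. -/
theorem stmt4 (φ ψ K : ℝ → ℝ)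
    (hφbdd : ∃ M : ℝ, ∀ t > (0 : ℝ), |φ t| ≤ M) (hφm : Measurable φ)
    (hKnn : ∀ s, 0 ≤ K s) (hKint : IntegrableOn K (Set.Ioi 0))
    (F : StieltjesFunction ℝ) (hF : ∀ t, F t = -ψ t)
    (hψ0 : Filter.Tendsto ψ Filter.atTop (nhds 0))
    (hineq : ∀ᵐ t ∂volume, 0 < t →
      φ t ≤ (∫ s in Set.Ioi t, K s * φ s) + ψ t) :
    ∀ᵐ t ∂volume, 0 < t →
      φ t ≤ ∫ s in Set.Ioi t, Real.exp (∫ r in t..s, K r) ∂F.measure := by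
  classical
  obtain ⟨M, hM⟩ := hφbdd
  have hM0 : 0 ≤ M := le_trans (abs_nonneg _) (hM 1 one_pos)
  obtain ⟨K', hK'm, hK'e⟩ := hKint.aestronglyMeasurable
  set Kb : ℝ → ℝ := (Ioi (0:ℝ)).indicator (fun x => max (K' x) 0) with hKbdef
  have hKbm : Measurable Kb :=
    (hK'm.measurable.max measurable_const).indicator measurableSet_Ioi
  have hKb0 : ∀ x, 0 ≤ Kb x := fun x =>
    indicator_nonneg (fun y _ => le_max_right _ _) x
  have hKbae : (fun s => Kb s) =ᵐ[volume.restrict (Ioi 0)] K := by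
    filter_upwards [hK'e, ae_restrict_mem measurableSet_Ioi] with x h1 h2
    rw [hKbdef]
    simp only [indicator_of_mem h2]
    rw [← h1]
    exact max_eq_left (hKnn x)
  have hKbi : Integrable Kb := by
    rw [hKbdef, integrable_indicator_iff measurableSet_Ioi]
    refine Integrable.mono' (hKint.congr hK'e).abs
      (hK'm.measurable.max measurable_const).aestronglyMeasurable ?_
    filter_upwards with x
    have h1 : max (K' x) 0 ≤ |K' x| := max_le (le_abs_self _) (abs_nonneg _)
    have h2 : 0 ≤ max (K' x) 0 := le_max_right _ _
    rw [Real.norm_eq_abs, abs_of_nonneg h2]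
    exact h1
  have hAmono := prim_mono hKb0 hKbi
  have hAcont := prim_cont hKbi
  set A := prim Kb with hAdef
  set C := ∫ x, Kb x with hCdef
  have hC0 : 0 ≤ C := integral_nonneg hKb0
  have hAnn : ∀ t, 0 ≤ t → 0 ≤ A t := by
    intro t ht
    have h := hAmono ht
    rwa [hAdef, prim_zero] at h
  have hAleC : ∀ t, A t ≤ C := by
    intro t
    rcases le_or_gt t 0 with h | h
    · have h2 := hAmono h
      rw [hAdef, prim_zero] at h2
      linarith
    · have h2 := prim_sub hKbi h.le (Kb := Kb) (a := 0)
      have h3 : (∫ x in Ioc (0:ℝ) t, Kb x) ≤ C :=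
        setIntegral_le_integral hKbi (Filter.Eventually.of_forall hKb0)
      rw [prim_zero] at h2
      rw [hAdef]
      linarith
  -- ψ facts
  have hψa : Antitone ψ := by
    intro a b hab
    have h := F.mono hab
    rw [hF a, hF b] at h
    linarith
  have hψnn : ∀ t, 0 ≤ ψ t := by
    intro t
    refine le_of_tendsto hψ0 ?_
    filter_upwards [eventually_ge_atTop t] with b hb
    exact hψa hb
  have hFtop : Tendsto (⇑F) atTop (𝓝 0) := by
    have hFe : ⇑F = fun t => -ψ t := funext hF
    rw [hFe]
    simpa using hψ0.neg
  have hν : ∀ t, F.measure (Ioi t) = ENNReal.ofReal (ψ t) := by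
    intro t
    have hU : Ioi t = ⋃ n : ℕ, Ioc t (t + (n + 1)) := by
      ext x
      simp only [mem_Ioi, mem_iUnion, mem_Ioc]
      constructor
      · intro hx
        obtain ⟨n, hn⟩ := exists_nat_ge (x - t)
        exact ⟨n, hx, by linarith⟩
      · rintro ⟨n, h1, _⟩; exact h1
    have hmon : Monotone fun n : ℕ => Ioc t (t + (n + 1)) := by
      intro m n hmn
      apply Ioc_subset_Ioc_right
      have : (m:ℝ) ≤ n := Nat.cast_le.2 hmn
      linarith
    have h1 : Tendsto (fun n : ℕ => F.measure (Ioc t (t + (n+1)))) atTop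
        (𝓝 (F.measure (Ioi t))) := by
      rw [hU]
      exact tendsto_measure_iUnion_atTop hmon
    have h2 : Tendsto (fun n : ℕ => F.measure (Ioc t (t + (n+1)))) atTop
        (𝓝 (ENNReal.ofReal (ψ t))) := by
      simp_rw [F.measure_Ioc]
      have h3 : Tendsto (fun n : ℕ => (t + ((n:ℝ)+1))) atTop atTop :=
        tendsto_atTop_add_const_left _ t
          (tendsto_atTop_add_const_right _ 1 tendsto_natCast_atTop_atTop)
      have h4 : Tendsto (fun n : ℕ => F (t + ((n:ℝ)+1)) - F t) atTop (𝓝 (0 - F t)) :=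
        (hFtop.comp h3).sub_const (F t)
      have h5 : (0:ℝ) - F t = ψ t := by rw [hF]; ring
      rw [← h5]
      exact ENNReal.tendsto_ofReal h4
    exact tendsto_nhds_unique h1 h2
  have hνfin : ∀ t, F.measure (Ioi t) < ⊤ := fun t => by
    rw [hν]; exact ENNReal.ofReal_lt_top
  have hνreal : ∀ t, (F.measure (Ioi t)).toReal = ψ t := fun t => by
    rw [hν, ENNReal.toReal_ofReal (hψnn t)]
  have hexpm : Measurable fun s => exp (A s) := (Real.continuous_exp.comp hAcont).measurable
  have hexpint : ∀ t, IntegrableOn (fun s => exp (A s)) (Ioi t) F.measure := by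
    intro t
    refine Integrable.mono' (g := fun _ => exp C)
      (integrableOn_const (hνfin t).ne) hexpm.aestronglyMeasurable ?_
    filter_upwards with s
    rw [Real.norm_eq_abs, abs_of_nonneg (exp_pos _).le]
    exact exp_le_exp.2 (hAleC s)
  set G : ℝ → ℝ := fun t => ∫ s in Ioi t, exp (A s) ∂F.measure with hGdef
  have hGanti : Antitone G := by
    intro a b hab
    exact setIntegral_mono_set (hexpint a)
      (Filter.Eventually.of_forall fun s => (exp_pos _).le)
      ((Ioi_subset_Ioi hab).eventuallyLE)
  have hGm : Measurable G := hGanti.measurable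
  have hGnn : ∀ t, 0 ≤ G t := fun t =>
    setIntegral_nonneg measurableSet_Ioi fun s _ => (exp_pos _).le
  have hGle : ∀ t, G t ≤ exp C * ψ t := by
    intro t
    have h1 : G t ≤ ∫ _ in Ioi t, exp C ∂F.measure := by
      refine integral_mono_ae (hexpint t) (integrableOn_const (hνfin t).ne) ?_
      filter_upwards with s using exp_le_exp.2 (hAleC s)
    rw [setIntegral_const, smul_eq_mul, measureReal_def, hνreal t, mul_comm] at h1
    exact h1
  set g : ℝ → ℝ := fun t => exp (-(A t)) * G t with hgdef
  have hgm : Measurable g := (Real.continuous_exp.comp hAcont.neg).measurable.mul hGm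
  have hgnn : ∀ t, 0 ≤ g t := fun t => mul_nonneg (exp_pos _).le (hGnn t)
  have hgle : ∀ t, 0 ≤ t → g t ≤ exp C * ψ 0 := by
    intro t ht
    have h1 : exp (-(A t)) ≤ 1 := by
      rw [← Real.exp_zero]
      exact exp_le_exp.2 (neg_nonpos.2 (hAnn t ht))
    calc g t = exp (-(A t)) * G t := rfl
      _ ≤ 1 * G t := mul_le_mul_of_nonneg_right h1 (hGnn t)
      _ = G t := one_mul _
      _ ≤ exp C * ψ t := hGle t
      _ ≤ exp C * ψ 0 := mul_le_mul_of_nonneg_left (hψa ht) (exp_pos _).le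
  have hgRHS : ∀ t, 0 < t →
      (∫ s in Ioi t, Real.exp (∫ r in t..s, K r) ∂F.measure) = g t := by
    intro t ht
    have heq : ∀ s ∈ Ioi t, Real.exp (∫ r in t..s, K r) = exp (-(A t)) * exp (A s) := by
      intro s hs
      have hts : t ≤ s := (mem_Ioi.1 hs).le
      have hsub : Ioc t s ⊆ Ioi (0:ℝ) := fun x hx => lt_trans ht hx.1
      have h1 : (∫ r in t..s, K r) = ∫ r in t..s, Kb r := by
        rw [intervalIntegral.integral_of_le hts, intervalIntegral.integral_of_le hts]
        exact (integral_congr_ae (ae_restrict_of_ae_restrict_of_subset hsub hKbae)).symm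
      have h2 : (∫ r in t..s, Kb r) = A s - A t := by
        rw [intervalIntegral.integral_of_le hts, hAdef, ← prim_sub hKbi hts]
      rw [h1, h2, ← Real.exp_add]
      congr 1
      ring
    rw [setIntegral_congr_fun measurableSet_Ioi heq, integral_const_mul]
  have hstepA : ∀ t, 0 < t → ψ t + (∫ s in Ioi t, Kb s * g s) ≤ g t := by
    intro t ht
    haveI hfinR : IsFiniteMeasure (F.measure.restrict (Ioi t)) := by
      constructor
      rw [Measure.restrict_apply_univ]
      exact hνfin t
    set Φ : ℝ × ℝ → ℝ := fun p =>
      ({q : ℝ × ℝ | q.1 < q.2}).indicator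
        (fun q => Kb q.1 * exp (-(A q.1)) * exp (A q.2)) p with hΦdef
    have hsetm : MeasurableSet {q : ℝ × ℝ | q.1 < q.2} :=
      measurableSet_lt measurable_fst measurable_snd
    have hΦm : Measurable Φ := by
      refine Measurable.indicator ?_ hsetm
      exact ((hKbm.comp measurable_fst).mul
        ((Real.continuous_exp.comp hAcont.neg).measurable.comp measurable_fst)).mul
        ((Real.continuous_exp.comp hAcont).measurable.comp measurable_snd)
    have hΦnn : ∀ p, 0 ≤ Φ p := by
      intro p
      refine indicator_nonneg (fun q _ => ?_) p
      exact mul_nonneg (mul_nonneg (hKb0 _) (exp_pos _).le) (exp_pos _).le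
    have hΦle : ∀ p : ℝ × ℝ, Φ p ≤ Kb p.1 * exp (-(A p.1)) * exp C := by
      intro p
      simp only [hΦdef, Set.indicator_apply, mem_setOf_eq]
      split_ifs
      · exact mul_le_mul_of_nonneg_left (exp_le_exp.2 (hAleC _))
          (mul_nonneg (hKb0 _) (exp_pos _).le)
      · exact mul_nonneg (mul_nonneg (hKb0 _) (exp_pos _).le) (exp_pos _).le
    have hΦint : Integrable Φ ((volume.restrict (Ioi t)).prod (F.measure.restrict (Ioi t))) := by
      rw [integrable_prod_iff hΦm.aestronglyMeasurable]
      constructor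
      · refine Filter.Eventually.of_forall fun s => ?_
        refine Integrable.mono' (g := fun _ => Kb s * exp (-(A s)) * exp C)
          (integrable_const _) (hΦm.comp measurable_prodMk_left).aestronglyMeasurable ?_
        filter_upwards with u
        rw [Real.norm_eq_abs, abs_of_nonneg (hΦnn _)]
        exact hΦle (s, u)
      · refine Integrable.mono' (g := fun s => Kb s * (exp C * (F.measure (Ioi t)).toReal))
          ((hKbi.mul_const _).integrableOn)
          hΦm.norm.aestronglyMeasurable.integral_prod_right' ?_
        filter_upwards [ae_restrict_mem measurableSet_Ioi] with s hs
        have h0s : (0:ℝ) < s := lt_trans ht hs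
        have hb1 : (∫ u, ‖Φ (s, u)‖ ∂(F.measure.restrict (Ioi t)))
            ≤ ∫ _, Kb s * exp (-(A s)) * exp C ∂(F.measure.restrict (Ioi t)) := by
          refine integral_mono_of_nonneg
            (Filter.Eventually.of_forall fun u => norm_nonneg _) (integrable_const _) ?_
          filter_upwards with u
          rw [Real.norm_eq_abs, abs_of_nonneg (hΦnn _)]
          exact hΦle (s, u)
        rw [integral_const, smul_eq_mul, measureReal_def, Measure.restrict_apply_univ] at hb1
        have h2 : exp (-(A s)) ≤ 1 := by
          rw [← Real.exp_zero]
          exact exp_le_exp.2 (neg_nonpos.2 (hAnn s h0s.le))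
        have hnn : (0:ℝ) ≤ ∫ u, ‖Φ (s, u)‖ ∂(F.measure.restrict (Ioi t)) :=
          integral_nonneg fun u => norm_nonneg _
        rw [Real.norm_eq_abs, abs_of_nonneg hnn]
        refine hb1.trans ?_
        have hm0 : (0:ℝ) ≤ (F.measure (Ioi t)).toReal := ENNReal.toReal_nonneg
        nlinarith [hKb0 s, exp_pos C, mul_nonneg (hKb0 s) (exp_pos C).le,
          mul_le_of_le_one_right (mul_nonneg (hKb0 s) (exp_pos C).le) h2]
    have hKg_eq : (∫ s in Ioi t, Kb s * g s)
        = ∫ s in Ioi t, (∫ u, Φ (s, u) ∂(F.measure.restrict (Ioi t))) := by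
      refine setIntegral_congr_fun measurableSet_Ioi fun s hs => ?_
      have hts : t < s := hs
      have h1 : ∀ u, Φ (s, u)
          = (Ioi s).indicator (fun u => Kb s * exp (-(A s)) * exp (A u)) u := by
        intro u
        simp only [hΦdef, Set.indicator_apply, mem_setOf_eq, mem_Ioi]
      calc Kb s * g s = Kb s * exp (-(A s)) * G s := by rw [hgdef]; ring
        _ = ∫ u, Φ (s, u) ∂(F.measure.restrict (Ioi t)) := by
            simp_rw [h1]
            rw [integral_indicator measurableSet_Ioi,
              Measure.restrict_restrict measurableSet_Ioi, Ioi_inter_Ioi,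
              sup_eq_left.2 hts.le, integral_const_mul]
    have hswap : (∫ s in Ioi t, (∫ u, Φ (s, u) ∂(F.measure.restrict (Ioi t))))
        = ∫ u, (∫ s in Ioi t, Φ (s, u)) ∂(F.measure.restrict (Ioi t)) :=
      integral_integral_swap hΦint
    have hinner : ∀ u ∈ Ioi t,
        (∫ s in Ioi t, Φ (s, u)) ≤ exp (-(A t)) * exp (A u) - 1 := by
      intro u hu
      have htu : t ≤ u := (mem_Ioi.1 hu).le
      have h1 : ∀ s, Φ (s, u)
          = (Iio u).indicator (fun s => Kb s * exp (-(A s)) * exp (A u)) s := by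
        intro s
        simp only [hΦdef, Set.indicator_apply, mem_setOf_eq, mem_Iio]
      have hexpu : exp (-(A u)) * exp (A u) = 1 := by
        rw [← Real.exp_add]
        simp
      calc (∫ s in Ioi t, Φ (s, u))
          = ∫ s in Ioi t, (Iio u).indicator (fun s => Kb s * exp (-(A s)) * exp (A u)) s := by
            simp_rw [h1]
        _ = ∫ s in Iio u ∩ Ioi t, Kb s * exp (-(A s)) * exp (A u) := by
            rw [integral_indicator measurableSet_Iio,
              Measure.restrict_restrict measurableSet_Iio]
        _ = (∫ s in Ioo t u, Kb s * exp (-(A s))) * exp (A u) := by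
            rw [Iio_inter_Ioi, integral_mul_const]
        _ ≤ (exp (-(A t)) - exp (-(A u))) * exp (A u) := by
            refine mul_le_mul_of_nonneg_right ?_ (exp_pos _).le
            rw [← integral_Ioc_eq_integral_Ioo, hAdef]
            exact GronwallAux.key_exp hKbm hKb0 hKbi htu
        _ = exp (-(A t)) * exp (A u) - 1 := by
            rw [sub_mul, hexpu]
    have hIright : Integrable (fun u => exp (-(A t)) * exp (A u) - 1)
        (F.measure.restrict (Ioi t)) :=
      ((hexpint t).const_mul _).sub (integrableOn_const (hνfin t).ne)
    have h2 : (∫ u, (∫ s in Ioi t, Φ (s, u)) ∂(F.measure.restrict (Ioi t)))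
        ≤ ∫ u, (exp (-(A t)) * exp (A u) - 1) ∂(F.measure.restrict (Ioi t)) := by
      refine integral_mono_of_nonneg ?_ hIright ?_
      · filter_upwards with u using integral_nonneg fun s => hΦnn _
      · filter_upwards [ae_restrict_mem measurableSet_Ioi] with u hu using hinner u hu
    have h3 : (∫ u, (exp (-(A t)) * exp (A u) - 1) ∂(F.measure.restrict (Ioi t)))
        = exp (-(A t)) * G t - ψ t := by
      rw [integral_sub ((hexpint t).const_mul _) (integrableOn_const (hνfin t).ne),
        integral_const_mul, integral_const, smul_eq_mul, mul_one,
        measureReal_def, Measure.restrict_apply_univ, hνreal]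
    have h4 : (∫ s in Ioi t, Kb s * g s) ≤ exp (-(A t)) * G t - ψ t := by
      rw [hKg_eq, hswap]
      rw [h3] at h2
      exact h2
    have h5 : g t = exp (-(A t)) * G t := rfl
    linarith
  have hKφint : ∀ t, 0 < t → IntegrableOn (fun s => Kb s * φ s) (Ioi t) := by
    intro t ht
    refine Integrable.mono' ((hKbi.mul_const M).integrableOn)
      (hKbm.mul hφm).aestronglyMeasurable ?_
    filter_upwards [ae_restrict_mem measurableSet_Ioi] with s hs
    rw [Real.norm_eq_abs, abs_mul, abs_of_nonneg (hKb0 s)]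
    exact mul_le_mul_of_nonneg_left (hM s (lt_trans ht hs)) (hKb0 s)
  have hKgint : ∀ t, 0 < t → IntegrableOn (fun s => Kb s * g s) (Ioi t) := by
    intro t ht
    refine Integrable.mono' ((hKbi.mul_const (exp C * ψ 0)).integrableOn)
      (hKbm.mul hgm).aestronglyMeasurable ?_
    filter_upwards [ae_restrict_mem measurableSet_Ioi] with s hs
    rw [Real.norm_eq_abs, abs_mul, abs_of_nonneg (hKb0 s), abs_of_nonneg (hgnn s)]
    exact mul_le_mul_of_nonneg_left (hgle s (lt_trans ht hs).le) (hKb0 s)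
  have hstepB : ∀ᵐ t ∂volume, 0 < t → φ t - g t ≤ ∫ s in Ioi t, Kb s * (φ s - g s) := by
    filter_upwards [hineq] with t hiq ht
    have e1 : (∫ s in Ioi t, K s * φ s) = ∫ s in Ioi t, Kb s * φ s := by
      refine integral_congr_ae ?_
      filter_upwards [ae_restrict_of_ae_restrict_of_subset (Ioi_subset_Ioi ht.le) hKbae]
        with s hs
      rw [hs]
    have h1 := hiq ht
    rw [e1] at h1
    have h2 := hstepA t ht
    have e2 : (∫ s in Ioi t, Kb s * (φ s - g s))
        = (∫ s in Ioi t, Kb s * φ s) - ∫ s in Ioi t, Kb s * g s := by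
      rw [← integral_sub (hKφint t ht) (hKgint t ht)]
      simp only [mul_sub]
    rw [e2]
    linarith
  set B := M + exp C * ψ 0 with hBdef
  have hB0 : 0 ≤ B := add_nonneg hM0 (mul_nonneg (exp_pos _).le (hψnn 0))
  have hhb : ∀ s, 0 < s → φ s - g s ≤ B := by
    intro s hs
    have h1 := abs_le.1 (hM s hs)
    have h2 := hgnn s
    have h3 : 0 ≤ exp C * ψ 0 := mul_nonneg (exp_pos _).le (hψnn 0)
    rw [hBdef]
    linarith [h1.2]
  have hKhint : ∀ t, 0 < t → IntegrableOn (fun s => Kb s * (φ s - g s)) (Ioi t) := by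
    intro t ht
    refine Integrable.congr ((hKφint t ht).sub (hKgint t ht))
      (Filter.Eventually.of_forall fun s => by simp only [Pi.sub_apply, hgdef]; ring)
  have hhalf : ∀ a b : ℝ, 0 ≤ a → (∫ s in Ioc a b, Kb s) ≤ 1/2 →
      (∀ᵐ s ∂volume, b < s → φ s - g s ≤ 0) →
      ∀ c, 0 ≤ c → (∀ᵐ s ∂volume, a < s → φ s - g s ≤ c) →
      (∀ᵐ s ∂volume, a < s → φ s - g s ≤ c/2) := by
    intro a b ha hab hb c hc hac
    filter_upwards [hstepB, hb, hac] with t hstept hbt hact hat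
    by_cases htb : b < t
    · exact (hbt htb).trans (by linarith)
    · push_neg at htb
      have h0t : 0 < t := lt_of_le_of_lt ha hat
      refine (hstept h0t).trans ?_
      have hRint : IntegrableOn ((Ioc t b).indicator (fun s => Kb s * c)) (Ioi t) volume :=
        (((hKbi.mul_const c).indicator measurableSet_Ioc).integrableOn)
      have hmono : (∫ s in Ioi t, Kb s * (φ s - g s))
          ≤ ∫ s in Ioi t, (Ioc t b).indicator (fun s => Kb s * c) s := by
        refine integral_mono_ae (hKhint t h0t) hRint ?_
        filter_upwards [ae_restrict_mem measurableSet_Ioi,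
          ae_restrict_of_ae (hb.and hac)] with s hs hsc
        rcases le_or_gt s b with hsb | hsb
        · rw [indicator_of_mem (show s ∈ Ioc t b from ⟨hs, hsb⟩)]
          exact mul_le_mul_of_nonneg_left (hsc.2 (hat.trans hs)) (hKb0 s)
        · rw [indicator_of_notMem (fun hmem => absurd hmem.2 (not_le.2 hsb))]
          exact mul_nonpos_iff.2 (Or.inl ⟨hKb0 s, hsc.1 hsb⟩)
      refine hmono.trans ?_
      rw [integral_indicator measurableSet_Ioc,
        Measure.restrict_restrict measurableSet_Ioc,
        inter_eq_left.2 Ioc_subset_Ioi_self, integral_mul_const]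
      have h5 : (∫ s in Ioc t b, Kb s) ≤ ∫ s in Ioc a b, Kb s :=
        setIntegral_mono_set hKbi.integrableOn (Filter.Eventually.of_forall hKb0)
          ((Ioc_subset_Ioc_left hat.le).eventuallyLE)
      calc (∫ s in Ioc t b, Kb s) * c ≤ (1/2) * c :=
            mul_le_mul_of_nonneg_right (h5.trans hab) hc
        _ = c/2 := by ring
  have hiter : ∀ a : ℝ, 0 ≤ a →
      (∀ c, 0 ≤ c → (∀ᵐ s ∂volume, a < s → φ s - g s ≤ c) →
        (∀ᵐ s ∂volume, a < s → φ s - g s ≤ c/2)) →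
      (∀ᵐ s ∂volume, a < s → φ s - g s ≤ 0) := by
    intro a ha hH
    have hn : ∀ n : ℕ, ∀ᵐ s ∂volume, a < s → φ s - g s ≤ B / 2^n := by
      intro n
      induction n with
      | zero =>
        refine Filter.Eventually.of_forall fun s hs => ?_
        simpa using hhb s (lt_of_le_of_lt ha hs)
      | succ n ih =>
        have h1 := hH (B / 2^n) (by positivity) ih
        refine h1.mono fun s hs hsa => ?_
        have h2 := hs hsa
        have h3 : B / 2^n / 2 = B / 2^(n+1) := by
          rw [pow_succ]
          ring
        linarith
    have hT : Tendsto (fun n : ℕ => B / 2^n) atTop (𝓝 0) := by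
      have h1 : Tendsto (fun n : ℕ => ((1:ℝ)/2)^n) atTop (𝓝 0) :=
        tendsto_pow_atTop_nhds_zero_of_lt_one (by norm_num) (by norm_num)
      have h2 := h1.const_mul B
      rw [mul_zero] at h2
      refine h2.congr fun n => ?_
      rw [one_div, inv_pow, ← div_eq_mul_inv]
    filter_upwards [ae_all_iff.2 hn] with s hs hsa
    exact ge_of_tendsto' hT fun n => hs n hsa
  obtain ⟨b₀, hb₀0, hb₀⟩ : ∃ b₀, 0 ≤ b₀ ∧ (∫ s in Ioi b₀, Kb s) ≤ 1/2 := by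
    have h1 := intervalIntegral_tendsto_integral_Ioi 0 hKbi.integrableOn
      (tendsto_id (α := ℝ))
    set C' := ∫ x in Ioi (0:ℝ), Kb x with hC'
    have h2 : ∀ᶠ b in (atTop : Filter ℝ), C' - 1/2 ≤ ∫ x in (0:ℝ)..b, Kb x :=
      h1.eventually (eventually_ge_nhds (by linarith))
    obtain ⟨b₀, hb₀1, hb₀2⟩ := (h2.and (eventually_ge_atTop (0:ℝ))).exists
    refine ⟨b₀, hb₀2, ?_⟩
    have hsplit := integral_inter_add_diff (s := Ioi (0:ℝ)) (t := Ioc 0 b₀)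
      (f := Kb) (μ := volume) measurableSet_Ioc hKbi.integrableOn
    have e1 : Ioi (0:ℝ) ∩ Ioc 0 b₀ = Ioc 0 b₀ := inter_eq_right.2 Ioc_subset_Ioi_self
    have e2 : Ioi (0:ℝ) \ Ioc 0 b₀ = Ioi b₀ := by
      ext x
      simp only [mem_diff, mem_Ioi, mem_Ioc, not_and, not_le]
      constructor
      · rintro ⟨hx1, hx2⟩
        exact hx2 hx1
      · intro hx
        exact ⟨lt_of_le_of_lt hb₀2 hx, fun _ => hx⟩
    have e3 : (∫ x in (0:ℝ)..b₀, Kb x) = ∫ x in Ioc (0:ℝ) b₀, Kb x :=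
      intervalIntegral.integral_of_le hb₀2
    rw [e1, e2] at hsplit
    rw [e3] at hb₀1
    linarith
  have htail : ∀ᵐ s ∂volume, b₀ < s → φ s - g s ≤ 0 := by
    refine hiter b₀ hb₀0 ?_
    intro c hc hac
    filter_upwards [hstepB, hac] with t hstept hact hbt
    have h0t : 0 < t := lt_of_le_of_lt hb₀0 hbt
    refine (hstept h0t).trans ?_
    have hmono : (∫ s in Ioi t, Kb s * (φ s - g s)) ≤ ∫ s in Ioi t, Kb s * c := by
      refine integral_mono_ae (hKhint t h0t) ((hKbi.mul_const c).integrableOn) ?_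
      filter_upwards [ae_restrict_mem measurableSet_Ioi, ae_restrict_of_ae hac]
        with s hs hsc
      exact mul_le_mul_of_nonneg_left (hsc (hbt.trans hs)) (hKb0 s)
    refine hmono.trans ?_
    rw [integral_mul_const]
    have h5 : (∫ s in Ioi t, Kb s) ≤ ∫ s in Ioi b₀, Kb s :=
      setIntegral_mono_set hKbi.integrableOn (Filter.Eventually.of_forall hKb0)
        ((Ioi_subset_Ioi hbt.le).eventuallyLE)
    calc (∫ s in Ioi t, Kb s) * c ≤ (1/2) * c :=
          mul_le_mul_of_nonneg_right (h5.trans hb₀) hc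
      _ = c/2 := by ring
  have hdown : ∀ n : ℕ, ∀ a, 0 ≤ a → a ≤ b₀ → A b₀ - A a ≤ n/2 →
      ∀ᵐ s ∂volume, a < s → φ s - g s ≤ 0 := by
    intro n
    induction n with
    | zero =>
      intro a ha hab hAb
      refine hiter a ha fun c hc hac => hhalf a b₀ ha ?_ htail c hc hac
      have he := prim_sub hKbi hab (Kb := Kb)
      rw [← hAdef] at he
      simp only [Nat.cast_zero] at hAb
      linarith
    | succ n ih =>
      intro a ha hab hAb
      by_cases hc2 : A b₀ - A a ≤ 1/2
      · refine hiter a ha fun c hc hac => hhalf a b₀ ha ?_ htail c hc hac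
        have he := prim_sub hKbi hab (Kb := Kb)
        rw [← hAdef] at he
        linarith
      · push_neg at hc2
        obtain ⟨x, hx, hAx⟩ := intermediate_value_Icc hab hAcont.continuousOn
          (show A a + 1/2 ∈ Icc (A a) (A b₀) from ⟨by linarith, by linarith⟩)
        have hAb' : A b₀ - A x ≤ n/2 := by
          rw [hAx]
          push_cast at hAb
          linarith
        have h1 := ih x (ha.trans hx.1) hx.2 hAb'
        refine hiter a ha fun c hc hac => hhalf a x ha ?_ h1 c hc hac
        have he := prim_sub hKbi hx.1 (Kb := Kb)
        rw [← hAdef] at he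
        rw [← he, hAx]
        linarith
  obtain ⟨n, hn⟩ := exists_nat_ge (2 * (A b₀ - A 0))
  have hfin := hdown n 0 le_rfl hb₀0 (by linarith)
  filter_upwards [hfin] with t ht hpos
  have h1 := ht hpos
  rw [hgRHS t hpos]
  linarith


end Main
end

section
/- Let Ω ⊂ ℝ^n be bounded and measurable, u : Ω → ℝ measurable, and B ∈ L²(Ω) nonnegative. Set p(t) = ∫_{{|u| > t}} B(x)² dx and q(s) = ∫_{{|u| > u*(s)}} B(x)² dx, where u* is the decreasing rearrangement of u and μ its distribution function (p is nonincreasing and q is nondecreasing, so both are differentiable a.e.). Then for a.e. t ∈ (0, ess sup |u|) at which μ'(t) exists and q is differentiable at μ(t): p'(t) = q'(μ(t)) · μ'(t); equivalently, (−p'(t))^{1/2} = (−μ'(t))^{1/2} · b̃((μ(t)/κ_n)^{1/n}), where b̃ satisfies b̃((s/κ_n)^{1/n})² = q'(s) for a.e. s. -/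
open MeasureTheory Set Real

/-- **Chain rule for the pseudo-rearrangement (Lemma 4, first part).**
Let `Ω ⊂ ℝⁿ` be bounded and measurable, `u : Ω → ℝ` measurable, `B ∈ L²(Ω)` nonnegative.
Set `p(t) = ∫_{|u|>t} B² dx` and `q(s) = ∫_{|u|>u*(s)} B² dx`, where `u*` is the
decreasing rearrangement of `u` and `μ` its distribution function. Then for a.e.
`t ∈ (0, ess sup |u|)` at which `μ'(t)` exists and `q` is differentiable at `μ(t)`:
`p'(t) = q'(μ(t)) μ'(t)`; equivalently, if `b̃((μ(t)/κₙ)^{1/n})² = q'(μ(t))` (with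
`b̃ ≥ 0`), then `(-p'(t))^{1/2} = (-μ'(t))^{1/2) b̃((μ(t)/κₙ)^{1/n})`. -/
theorem stmt5 {n : ℕ} (hn : 2 ≤ n)
    (Ω : Set (EuclideanSpace ℝ (Fin n))) (hΩm : MeasurableSet Ω)
    (hΩb : Bornology.IsBounded Ω)
    (u B : EuclideanSpace ℝ (Fin n) → ℝ)
    (hum : Measurable u) (hB2 : MemLp B 2 (volume.restrict Ω)) (hBnn : ∀ x, 0 ≤ B x)
    (κ : ℝ) (hκ : 0 < κ)
    (μ ustar p q : ℝ → ℝ)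
    (hμ : ∀ t, μ t = (volume {x | x ∈ Ω ∧ t < |u x|}).toReal)
    (hustar : ∀ s, ustar s = sSup {t : ℝ | 0 < t ∧ s < μ t})
    (hp : ∀ t, p t = ∫ x in {x | x ∈ Ω ∧ t < |u x|}, B x ^ 2)
    (hq : ∀ s, q s = ∫ x in {x | x ∈ Ω ∧ ustar s < |u x|}, B x ^ 2)
    (btilde : ℝ → ℝ) (hbtnn : ∀ r, 0 ≤ btilde r) :
    ∀ᵐ t ∂volume, t ∈ Set.Ioo 0 (essSup (fun x => |u x|) (volume.restrict Ω)) →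
      ∀ μ' q' : ℝ, HasDerivAt μ μ' t → HasDerivAt q q' (μ t) →
        HasDerivAt p (q' * μ') t ∧
        (btilde ((μ t / κ) ^ ((1 : ℝ) / n)) ^ 2 = q' →
          Real.sqrt (-(q' * μ')) =
            Real.sqrt (-μ') * btilde ((μ t / κ) ^ ((1 : ℝ) / n))) := by
  -- measurability and finiteness of the superlevel sets
  have hmeas : ∀ c : ℝ, MeasurableSet {x : EuclideanSpace ℝ (Fin n) | x ∈ Ω ∧ c < |u x|} := by
    intro c
    exact hΩm.inter (measurableSet_lt measurable_const hum.abs)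
  have hsub : ∀ c : ℝ, {x : EuclideanSpace ℝ (Fin n) | x ∈ Ω ∧ c < |u x|} ⊆ Ω :=
    fun c x hx => hx.1
  have hfin : ∀ c : ℝ, volume {x : EuclideanSpace ℝ (Fin n) | x ∈ Ω ∧ c < |u x|} ≠ ⊤ := by
    intro c
    exact ((measure_mono (hsub c)).trans_lt hΩb.measure_lt_top).ne
  have hmono : ∀ ⦃s t : ℝ⦄, s ≤ t →
      {x : EuclideanSpace ℝ (Fin n) | x ∈ Ω ∧ t < |u x|}
        ⊆ {x : EuclideanSpace ℝ (Fin n) | x ∈ Ω ∧ s < |u x|} :=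
    fun s t hst x hx => ⟨hx.1, lt_of_le_of_lt hst hx.2⟩
  have hAnt : Antitone μ := by
    intro s t hst
    rw [hμ, hμ]
    exact ENNReal.toReal_mono (hfin s) (measure_mono (hmono hst))
  -- the key pointwise identity p t = q (μ t) for t > 0
  have key : ∀ t : ℝ, 0 < t → p t = q (μ t) := by
    intro t ht
    set a := ustar (μ t) with ha_def
    have hSbdd : ∀ τ ∈ {τ : ℝ | 0 < τ ∧ μ t < μ τ}, τ ≤ t := by
      intro τ hτ
      by_contra hcon
      push_neg at hcon
      exact absurd (hAnt hcon.le) (not_le.mpr hτ.2)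
    have ha_le : a ≤ t := by
      rw [ha_def, hustar]
      exact Real.sSup_le hSbdd ht.le
    have ha_nonneg : 0 ≤ a := by
      rw [ha_def, hustar]
      exact Real.sSup_nonneg (fun τ hτ => hτ.1.le)
    have hplateau : ∀ τ : ℝ, a < τ → τ ≤ t → μ τ = μ t := by
      intro τ haτ hτt
      refine le_antisymm ?_ (hAnt hτt)
      by_contra hcon
      push_neg at hcon
      have hτS : τ ∈ {τ : ℝ | 0 < τ ∧ μ t < μ τ} := ⟨lt_of_le_of_lt ha_nonneg haτ, hcon⟩
      have : τ ≤ a := by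
        rw [ha_def, hustar]
        exact le_csSup ⟨t, hSbdd⟩ hτS
      exact absurd haτ (not_lt.mpr this)
    have hνeq : ∀ τ : ℝ, a < τ → τ ≤ t →
        volume {x : EuclideanSpace ℝ (Fin n) | x ∈ Ω ∧ τ < |u x|}
          = volume {x : EuclideanSpace ℝ (Fin n) | x ∈ Ω ∧ t < |u x|} := by
      intro τ h1 h2
      have := hplateau τ h1 h2
      rw [hμ, hμ] at this
      exact (ENNReal.toReal_eq_toReal_iff' (hfin τ) (hfin t)).mp this
    -- the difference set is null
    have hnull : volume ({x : EuclideanSpace ℝ (Fin n) | x ∈ Ω ∧ a < |u x|}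
        \ {x : EuclideanSpace ℝ (Fin n) | x ∈ Ω ∧ t < |u x|}) = 0 := by
      rcases eq_or_lt_of_le ha_le with heq | hlt
      · rw [heq, Set.sdiff_self]
        simp
      · have hta : 0 < t - a := sub_pos.mpr hlt
        have hcover : ({x : EuclideanSpace ℝ (Fin n) | x ∈ Ω ∧ a < |u x|}
            \ {x : EuclideanSpace ℝ (Fin n) | x ∈ Ω ∧ t < |u x|}) ⊆
            ⋃ k : ℕ, ({x : EuclideanSpace ℝ (Fin n) | x ∈ Ω ∧ a + (t - a) / (k + 1) < |u x|}
              \ {x : EuclideanSpace ℝ (Fin n) | x ∈ Ω ∧ t < |u x|}) := by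
          intro x hx
          obtain ⟨⟨hxΩ, hxa⟩, hxt⟩ := hx
          have hpos : 0 < |u x| - a := sub_pos.mpr hxa
          obtain ⟨k, hk⟩ := exists_nat_gt ((t - a) / (|u x| - a))
          refine Set.mem_iUnion.mpr ⟨k, ⟨⟨hxΩ, ?_⟩, hxt⟩⟩
          have hk1 : (t - a) / (|u x| - a) < (k : ℝ) + 1 := hk.trans (lt_add_one _)
          have hlt' : (t - a) / ((k : ℝ) + 1) < |u x| - a := by
            rw [div_lt_iff₀ (by positivity)]
            rw [div_lt_iff₀ hpos] at hk1
            linarith [hk1]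
          linarith
        refine measure_mono_null hcover (measure_iUnion_null fun k => ?_)
        have hak_gt : a < a + (t - a) / ((k : ℝ) + 1) := by
          have : 0 < (t - a) / ((k : ℝ) + 1) := by positivity
          linarith
        have hak_le : a + (t - a) / ((k : ℝ) + 1) ≤ t := by
          have : (t - a) / ((k : ℝ) + 1) ≤ t - a :=
            div_le_self hta.le (by simp)
          linarith
        rw [measure_diff (hmono hak_le) (hmeas t).nullMeasurableSet (hfin t),
          hνeq _ hak_gt hak_le, tsub_self]
    -- conclude p t = q (μ t)
    rw [hp, hq]
    refine (setIntegral_congr_set ?_).symm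
    rw [MeasureTheory.ae_eq_set]
    refine ⟨hnull, ?_⟩
    rw [Set.diff_eq_empty.mpr (hmono ha_le)]
    exact measure_empty
  refine Filter.Eventually.of_forall fun t ht μ' q' hμd hqd => ?_
  have hev : p =ᶠ[nhds t] (q ∘ μ) := by
    filter_upwards [isOpen_Ioi.mem_nhds ht.1] with τ hτ
    exact key τ hτ
  have hcomp : HasDerivAt (q ∘ μ) (q' * μ') t := hqd.comp t hμd
  refine ⟨hcomp.congr_of_eventuallyEq hev, fun hb => ?_⟩
  have h1 : -(q' * μ') = btilde ((μ t / κ) ^ ((1 : ℝ) / n)) ^ 2 * (-μ') := by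
    rw [← hb]; ring
  rw [h1, Real.sqrt_mul (sq_nonneg _), Real.sqrt_sq (hbtnn _), mul_comm]
end

section
/- Let u : ℝ^n → ℝ be Lipschitz with compact support contained in a bounded open set Ω ⊂ ℝ^n, and let 0 < q ≤ 2. Then for a.e. t ∈ (0, ess sup |u|): −(d/dt) ∫_{{|u| > t}} H(∇u)^q dx ≤ (−μ'(t))^{1−q/2} · ( −(d/dt) ∫_{{|u| > t}} H(∇u)² dx )^{q/2}, where μ(t) = |{|u| > t}| and all the monotone functions of t being differentiated are differentiable a.e. -/
open MeasureTheory Set Real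

/-- **Hölder-type differential inequality for the level-set gauge energies.**
Let `H` be a gauge (convex, `C¹` away from `0`, `1`-homogeneous, `α‖ξ‖ ≤ H ξ ≤ β‖ξ‖`),
and let `u : ℝⁿ → ℝ` be Lipschitz with compact support contained in a bounded open set
`Ω`, with a.e. gradient `Du`, and let `0 < q ≤ 2`. With `μ(t) = |{|u| > t}|`,
for a.e. `t ∈ (0, ess sup |u|)`, at every point where all three derivatives exist,
`-(d/dt) ∫_{|u|>t} H(∇u)^q ≤ (-μ'(t))^{1-q/2} (-(d/dt) ∫_{|u|>t} H(∇u)²)^{q/2}`. -/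
theorem stmt7 {n : ℕ} (hn : 2 ≤ n)
    (H : EuclideanSpace ℝ (Fin n) → ℝ) (α β : ℝ) (hα : 0 < α) (hαβ : α ≤ β)
    (hconv : ConvexOn ℝ Set.univ H)
    (hC1 : ContDiffOn ℝ 1 H ({(0 : EuclideanSpace ℝ (Fin n))}ᶜ))
    (hhom : ∀ (t : ℝ) (ξ : EuclideanSpace ℝ (Fin n)), H (t • ξ) = |t| * H ξ)
    (hlow : ∀ ξ, α * ‖ξ‖ ≤ H ξ) (hup : ∀ ξ, H ξ ≤ β * ‖ξ‖)
    (Ω : Set (EuclideanSpace ℝ (Fin n))) (hΩo : IsOpen Ω) (hΩb : Bornology.IsBounded Ω)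
    (u : EuclideanSpace ℝ (Fin n) → ℝ) (hu : ∃ L, LipschitzWith L u)
    (hus : HasCompactSupport u) (husΩ : tsupport u ⊆ Ω)
    (Du : EuclideanSpace ℝ (Fin n) → EuclideanSpace ℝ (Fin n))
    (hDu : ∀ᵐ x ∂volume, HasGradientAt u (Du x) x)
    (q : ℝ) (hq0 : 0 < q) (hq2 : q ≤ 2)
    (μ Gq G2 : ℝ → ℝ)
    (hμ : ∀ t, μ t = (volume {x | t < |u x|}).toReal)
    (hGq : ∀ t, Gq t = ∫ x in {x | t < |u x|}, H (Du x) ^ q)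
    (hG2 : ∀ t, G2 t = ∫ x in {x | t < |u x|}, H (Du x) ^ 2) :
    ∀ᵐ t ∂volume, t ∈ Set.Ioo 0 (essSup (fun x => |u x|) (volume.restrict Ω)) →
      ∀ Gq' μ' G2' : ℝ, HasDerivAt Gq Gq' t → HasDerivAt μ μ' t → HasDerivAt G2 G2' t →
        -Gq' ≤ (-μ') ^ (1 - q / 2) * (-G2') ^ (q / 2) := by
  obtain ⟨L, hL⟩ := hu
  have hβ : 0 < β := lt_of_lt_of_le hα hαβ
  have hH0 : ∀ ξ, 0 ≤ H ξ := fun ξ =>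
    le_trans (mul_nonneg hα.le (norm_nonneg ξ)) (hlow ξ)
  -- H is Lipschitz, hence continuous and measurable
  have hsubadd : ∀ a b, H (a + b) ≤ H a + H b := by
    intro a b
    have h2 : H (a + b) = 2 * H ((1/2 : ℝ) • a + (1/2 : ℝ) • b) := by
      have : a + b = (2:ℝ) • ((1/2 : ℝ) • a + (1/2 : ℝ) • b) := by module
      rw [this, hhom]; norm_num
    have hcv := hconv.2 (mem_univ a) (mem_univ b)
      (by norm_num : (0:ℝ) ≤ 1/2) (by norm_num : (0:ℝ) ≤ 1/2) (by norm_num)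
    simp only [smul_eq_mul] at hcv
    linarith
  have hHlip : ∀ a b, H a - H b ≤ β * ‖a - b‖ := by
    intro a b
    have h1 := hsubadd (a - b) b
    rw [sub_add_cancel] at h1
    have := hup (a - b)
    linarith
  have hHc : Continuous H := by
    refine (LipschitzWith.of_dist_le_mul (K := β.toNNReal) (f := H) ?_).continuous
    intro a b
    rw [Real.coe_toNNReal β hβ.le, Real.dist_eq, dist_eq_norm]
    rw [abs_sub_le_iff]
    constructor
    · exact hHlip a b
    · have := hHlip b a
      rwa [norm_sub_rev] at this
  have hucont : Continuous u := hL.continuous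
  -- measurability of Du
  have hDu_ae : Du =ᵐ[volume]
      fun x => (InnerProductSpace.toDual ℝ (EuclideanSpace ℝ (Fin n))).symm (fderiv ℝ u x) := by
    filter_upwards [hDu] with x hx
    exact (hx.gradient).symm
  have hDu_aem : AEMeasurable Du volume :=
    ⟨_, ((InnerProductSpace.toDual ℝ (EuclideanSpace ℝ (Fin n))).symm.continuous.measurable).comp
      (measurable_fderiv ℝ u), hDu_ae⟩
  have hfaem : AEMeasurable (fun x => H (Du x)) volume :=
    hHc.measurable.comp_aemeasurable hDu_aem
  have hfbd : ∀ᵐ x ∂volume, H (Du x) ≤ β * L := by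
    filter_upwards [hDu] with x hx
    have h1 : ‖(InnerProductSpace.toDual ℝ (EuclideanSpace ℝ (Fin n))) (Du x)‖ ≤ L :=
      hx.hasFDerivAt.le_of_lipschitz hL
    rw [LinearIsometryEquiv.norm_map] at h1
    calc H (Du x) ≤ β * ‖Du x‖ := hup _
      _ ≤ β * L := by
        exact mul_le_mul_of_nonneg_left h1 hβ.le
  -- level sets
  have hSmeas : ∀ t : ℝ, MeasurableSet {x | t < |u x|} :=
    fun t => measurableSet_lt measurable_const hucont.abs.measurable
  have hSfin : ∀ t : ℝ, 0 < t → volume {x | t < |u x|} ≠ ⊤ := by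
    intro t ht
    have hsub : {x | t < |u x|} ⊆ tsupport u := by
      intro x hx
      by_contra h
      have h0 : u x = 0 := image_eq_zero_of_notMem_tsupport h
      simp only [mem_setOf_eq, h0, abs_zero] at hx
      linarith
    exact ne_of_lt (lt_of_le_of_lt (measure_mono hsub) (IsCompact.measure_lt_top hus))
  have hint_q : ∀ t : ℝ, 0 < t → IntegrableOn (fun x => H (Du x) ^ q) {x | t < |u x|} volume := by
    intro t ht
    refine Measure.integrableOn_of_bounded (hSfin t ht)
      ((hfaem.pow aemeasurable_const).aestronglyMeasurable) (M := (β * L) ^ q) ?_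
    filter_upwards [ae_restrict_of_ae hfbd] with x hx
    rw [Real.norm_of_nonneg (Real.rpow_nonneg (hH0 _) q)]
    exact Real.rpow_le_rpow (hH0 _) hx hq0.le
  have hint_2 : ∀ t : ℝ, 0 < t → IntegrableOn (fun x => H (Du x) ^ 2) {x | t < |u x|} volume := by
    intro t ht
    refine Measure.integrableOn_of_bounded (hSfin t ht)
      ((hfaem.pow_const 2).aestronglyMeasurable) (M := (β * L) ^ 2) ?_
    filter_upwards [ae_restrict_of_ae hfbd] with x hx
    rw [Real.norm_of_nonneg (sq_nonneg _)]
    exact pow_le_pow_left₀ (hH0 _) hx 2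
  -- key difference inequality
  have key : ∀ t s : ℝ, 0 < t → t < s →
      (0 ≤ μ t - μ s) ∧ (0 ≤ G2 t - G2 s) ∧
      Gq t - Gq s ≤ (μ t - μ s) ^ (1 - q/2) * (G2 t - G2 s) ^ (q/2) := by
    intro t s ht hts
    have hss : {x | s < |u x|} ⊆ {x | t < |u x|} := fun x hx => lt_trans hts hx
    set A := {x | t < |u x|} \ {x | s < |u x|} with hA
    have hAmeas : MeasurableSet A := (hSmeas t).diff (hSmeas s)
    have hAfin : volume A ≠ ⊤ :=
      ne_of_lt (lt_of_le_of_lt (measure_mono diff_subset) (hSfin t ht).lt_top)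
    have hμdiff : μ t - μ s = (volume A).toReal := by
      have hsum : volume {x | s < |u x|} + volume A = volume {x | t < |u x|} := by
        rw [← measure_union disjoint_sdiff_right hAmeas, union_diff_cancel hss]
      rw [hμ, hμ, ← hsum, ENNReal.toReal_add (hSfin s (ht.trans hts)) hAfin]
      ring
    have hGqdiff : Gq t - Gq s = ∫ x in A, H (Du x) ^ q := by
      rw [hGq, hGq, hA, integral_diff (hSmeas s) (hint_q t ht) hss]
    have hG2diff : G2 t - G2 s = ∫ x in A, H (Du x) ^ 2 := by
      rw [hG2, hG2, hA, integral_diff (hSmeas s) (hint_2 t ht) hss]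
    have hX : 0 ≤ μ t - μ s := by rw [hμdiff]; exact ENNReal.toReal_nonneg
    have hY : 0 ≤ G2 t - G2 s := by
      rw [hG2diff]; exact integral_nonneg fun x => sq_nonneg _
    refine ⟨hX, hY, ?_⟩
    rcases eq_or_lt_of_le hq2 with hq2e | hq2l
    · -- q = 2
      subst hq2e
      have hGqG2 : Gq t - Gq s = G2 t - G2 s := by
        rw [hGqdiff, hG2diff]
        refine integral_congr_ae (Filter.Eventually.of_forall fun x => ?_)
        simp [Real.rpow_natCast]
      rw [hGqG2]
      norm_num
    · -- q < 2 : Hölder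
      have hconj : (2/q).HolderConjugate (2/(2-q)) := by
        rw [Real.holderConjugate_iff]
        constructor
        · rw [lt_div_iff₀ hq0]; linarith
        · rw [inv_div, inv_div]; ring
      haveI : IsFiniteMeasure (volume.restrict A) :=
        ⟨by rw [Measure.restrict_apply_univ]; exact hAfin.lt_top⟩
      have hfq_mem : MemLp (fun x => H (Du x) ^ q) (ENNReal.ofReal (2/q))
          (volume.restrict A) := by
        refine MemLp.of_bound ((hfaem.pow aemeasurable_const).aestronglyMeasurable.restrict)
          ((β * L) ^ q) ?_
        filter_upwards [ae_restrict_of_ae hfbd] with x hx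
        rw [Real.norm_of_nonneg (Real.rpow_nonneg (hH0 _) q)]
        exact Real.rpow_le_rpow (hH0 _) hx hq0.le
      have h1_mem : MemLp (fun _ : EuclideanSpace ℝ (Fin n) => (1:ℝ))
          (ENNReal.ofReal (2/(2-q))) (volume.restrict A) := memLp_const 1
      have hhold := integral_mul_le_Lp_mul_Lq_of_nonneg hconj
        (Filter.Eventually.of_forall fun x => Real.rpow_nonneg (hH0 _) q)
        (Filter.Eventually.of_forall fun _ => zero_le_one) hfq_mem h1_mem
      simp only [mul_one, Real.one_rpow] at hhold
      have hpow : ∀ x, (H (Du x) ^ q) ^ (2/q : ℝ) = H (Du x) ^ 2 := by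
        intro x
        rw [← Real.rpow_natCast (H (Du x)) 2, ← Real.rpow_mul (hH0 _)]
        congr 1
        field_simp
        norm_num
      rw [show (∫ x in A, (H (Du x) ^ q) ^ (2/q : ℝ)) = ∫ x in A, H (Du x) ^ 2 from
        integral_congr_ae (Filter.Eventually.of_forall fun x => hpow x)] at hhold
      rw [integral_const, smul_eq_mul, mul_one, measureReal_restrict_apply_univ] at hhold
      rw [one_div_div, one_div_div] at hhold
      rw [hGqdiff, hG2diff, hμdiff]
      calc (∫ x in A, H (Du x) ^ q)
          ≤ (∫ x in A, H (Du x) ^ 2) ^ (q/2 : ℝ) * (volume A).toReal ^ ((2-q)/2 : ℝ) := hhold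
        _ = (volume A).toReal ^ (1 - q/2 : ℝ) * (∫ x in A, H (Du x) ^ 2) ^ (q/2 : ℝ) := by
            rw [mul_comm]
            congr 2
            ring
  -- main argument
  refine Filter.Eventually.of_forall ?_
  intro t ht Gq' μ' G2' hGq' hμ' hG2'
  have ht0 : 0 < t := ht.1
  have hslope : ∀ s, s ∈ Ioi t →
      -(slope Gq t s) ≤ (-(slope μ t s)) ^ (1 - q/2) * (-(slope G2 t s)) ^ (q/2) := by
    intro s hs
    have hd : 0 < s - t := sub_pos.2 hs
    obtain ⟨hX, hY, hk⟩ := key t s ht0 hs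
    have e1 : -(slope Gq t s) = (Gq t - Gq s) / (s - t) := by
      rw [slope_def_field]; ring
    have e2 : -(slope μ t s) = (μ t - μ s) / (s - t) := by
      rw [slope_def_field]; ring
    have e3 : -(slope G2 t s) = (G2 t - G2 s) / (s - t) := by
      rw [slope_def_field]; ring
    rw [e1, e2, e3, Real.div_rpow hX hd.le, Real.div_rpow hY hd.le, div_mul_div_comm,
      ← Real.rpow_add hd, show (1 - q/2) + q/2 = 1 by ring, Real.rpow_one]
    gcongr
  have hsub' : Ioi t ⊆ {t}ᶜ := fun s hs => ne_of_gt hs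
  have hGqs : Filter.Tendsto (fun s => -(slope Gq t s)) (nhdsWithin t (Ioi t)) (nhds (-Gq')) :=
    ((hasDerivAt_iff_tendsto_slope.1 hGq').mono_left (nhdsWithin_mono t hsub')).neg
  have hμs : Filter.Tendsto (fun s => -(slope μ t s)) (nhdsWithin t (Ioi t)) (nhds (-μ')) :=
    ((hasDerivAt_iff_tendsto_slope.1 hμ').mono_left (nhdsWithin_mono t hsub')).neg
  have hG2s : Filter.Tendsto (fun s => -(slope G2 t s)) (nhdsWithin t (Ioi t)) (nhds (-G2')) :=
    ((hasDerivAt_iff_tendsto_slope.1 hG2').mono_left (nhdsWithin_mono t hsub')).neg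
  have hRHS : Filter.Tendsto
      (fun s => (-(slope μ t s)) ^ (1 - q/2) * (-(slope G2 t s)) ^ (q/2))
      (nhdsWithin t (Ioi t)) (nhds ((-μ') ^ (1 - q/2) * (-G2') ^ (q/2))) :=
    (hμs.rpow_const (Or.inr (by linarith))).mul (hG2s.rpow_const (Or.inr (by positivity)))
  exact le_of_tendsto_of_tendsto hGqs hRHS (eventually_nhdsWithin_of_forall hslope)
end

section
/- Let n ≥ 2 be an integer, R > 0, let g : (0,R] → ℝ and F : (0,R] → ℝ be continuous with g and r ↦ F(r)r^{n−1} integrable on (0,R). Define v(ρ) = ∫_ρ^R t^{1−n} ( ∫_0^t exp( ∫_t^r g(s) ds ) F(r) r^{n−1} dr ) dt for ρ ∈ (0,R]. Then v is twice differentiable on (0,R), v(R) = 0, and for every ρ ∈ (0,R): −v''(ρ) − ((n−1)/ρ)·v'(ρ) − g(ρ)·v'(ρ) = F(ρ). -/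
open MeasureTheory Set Real intervalIntegral


noncomputable def Gf (g : ℝ → ℝ) (t : ℝ) : ℝ := ∫ s in (0:ℝ)..t, g s
noncomputable def hf (g F : ℝ → ℝ) (k : ℕ) (r : ℝ) : ℝ :=
  Real.exp (Gf g r) * (F r * r ^ k)
noncomputable def Hf (g F : ℝ → ℝ) (k : ℕ) (t : ℝ) : ℝ := ∫ r in (0:ℝ)..t, hf g F k r
noncomputable def phif (g F : ℝ → ℝ) (k : ℕ) (t : ℝ) : ℝ :=
  (1 / t ^ k) * (Real.exp (-Gf g t) * Hf g F k t)


/-- **The explicit radial function solves the symmetrized radial ODE.**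
Let `n ≥ 2`, `R > 0`, and let `g, F : (0,R] → ℝ` be continuous with `g` and
`r ↦ F(r) r^{n-1}` integrable on `(0,R)`. Define
`v(ρ) = ∫_ρ^R t^{1-n} (∫_0^t exp(∫_t^r g(s) ds) F(r) r^{n-1} dr) dt`.
Then `v` is twice differentiable on `(0,R)`, `v(R) = 0`, and for every `ρ ∈ (0,R)`:
`-v''(ρ) - ((n-1)/ρ) v'(ρ) - g(ρ) v'(ρ) = F(ρ)`. -/
theorem stmt10 (n : ℕ) (hn : 2 ≤ n) (R : ℝ) (hR : 0 < R) (g F : ℝ → ℝ)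
    (hg : ContinuousOn g (Set.Ioc 0 R)) (hF : ContinuousOn F (Set.Ioc 0 R))
    (hgint : IntegrableOn g (Set.Ioo 0 R))
    (hFint : IntegrableOn (fun r => F r * r ^ (n - 1)) (Set.Ioo 0 R))
    (v : ℝ → ℝ)
    (hv : ∀ ρ ∈ Set.Ioc (0 : ℝ) R,
      v ρ = ∫ t in ρ..R, (1 / t ^ (n - 1)) *
        ∫ r in (0 : ℝ)..t, Real.exp (∫ s in t..r, g s) * (F r * r ^ (n - 1))) :
    v R = 0 ∧
    ∃ v' v'' : ℝ → ℝ,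
      (∀ ρ ∈ Set.Ioo (0 : ℝ) R, HasDerivAt v (v' ρ) ρ) ∧
      (∀ ρ ∈ Set.Ioo (0 : ℝ) R, HasDerivAt v' (v'' ρ) ρ) ∧
      ∀ ρ ∈ Set.Ioo (0 : ℝ) R,
        -v'' ρ - (((n : ℝ) - 1) / ρ) * v' ρ - g ρ * v' ρ = F ρ := by
  obtain ⟨m, rfl⟩ : ∃ m, n = m + 2 := ⟨n - 2, by omega⟩
  clear hn
  have h21 : m + 2 - 1 = m + 1 := rfl
  rw [h21] at hFint
  simp only [h21] at hv
  -- basic integrability facts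
  have hgIcc : IntegrableOn g (Icc 0 R) := hgint.congr_set_ae Ioo_ae_eq_Icc.symm
  have hIIg : ∀ a ∈ Icc (0:ℝ) R, ∀ b ∈ Icc (0:ℝ) R, IntervalIntegrable g volume a b := by
    intro a ha b hb
    apply (hgIcc.mono_set _).intervalIntegrable
    rw [← uIcc_of_le hR.le]
    exact uIcc_subset_uIcc (by rwa [uIcc_of_le hR.le]) (by rwa [uIcc_of_le hR.le])
  -- continuity of the primitive G
  have hGcont : ContinuousOn (Gf g) (Icc 0 R) := by
    have := intervalIntegral.continuousOn_primitive_interval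
      (a := (0:ℝ)) (b := R) (μ := volume) (f := g) (by rwa [uIcc_of_le hR.le])
    rwa [uIcc_of_le hR.le] at this
  -- bound for G on Icc 0 R
  set M : ℝ := ∫ s in Ioo (0:ℝ) R, |g s| with hM
  have hGbound : ∀ x ∈ Icc (0:ℝ) R, Gf g x ≤ M := by
    intro x hx
    have hx0 : (0:ℝ) ≤ x := hx.1
    have h1 : Gf g x = ∫ s in Ioc (0:ℝ) x, g s := intervalIntegral.integral_of_le hx0
    have h2 : ∫ s in Ioc (0:ℝ) x, g s ≤ ∫ s in Ioc (0:ℝ) x, |g s| := by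
      apply integral_mono (hgIcc.mono_set (Ioc_subset_Icc_self.trans
        (Icc_subset_Icc le_rfl hx.2))) ((hgIcc.mono_set (Ioc_subset_Icc_self.trans
        (Icc_subset_Icc le_rfl hx.2))).abs) (fun s => le_abs_self _)
    have h3 : ∫ s in Ioc (0:ℝ) x, |g s| ≤ M := by
      apply setIntegral_mono_set hgint.abs
        (Filter.Eventually.of_forall fun s => abs_nonneg _)
      exact ((Ioo_ae_eq_Ioc (a := (0:ℝ)) (b := x)).symm.le).trans
        (Ioo_subset_Ioo le_rfl hx.2).eventuallyLE
    linarith [h1 ▸ h2.trans h3]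
  -- integrability of h
  have hhIoo : IntegrableOn (hf g F (m+1)) (Ioo 0 R) := by
    apply Integrable.bdd_mul (c := Real.exp M) hFint
    · exact (Real.continuous_exp.comp_continuousOn
        (hGcont.mono Ioo_subset_Icc_self)).aestronglyMeasurable measurableSet_Ioo
    · refine (ae_restrict_iff' measurableSet_Ioo).2
        (Filter.Eventually.of_forall fun x hx => ?_)
      rw [Real.norm_eq_abs, abs_of_nonneg (Real.exp_pos _).le]
      exact Real.exp_le_exp.2 (hGbound x (Ioo_subset_Icc_self hx))
  have hhIcc : IntegrableOn (hf g F (m+1)) (Icc 0 R) := hhIoo.congr_set_ae Ioo_ae_eq_Icc.symm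
  have hIIh : ∀ a ∈ Icc (0:ℝ) R, ∀ b ∈ Icc (0:ℝ) R,
      IntervalIntegrable (hf g F (m+1)) volume a b := by
    intro a ha b hb
    apply (hhIcc.mono_set _).intervalIntegrable
    rw [← uIcc_of_le hR.le]
    exact uIcc_subset_uIcc (by rwa [uIcc_of_le hR.le]) (by rwa [uIcc_of_le hR.le])
  have hHcont : ContinuousOn (Hf g F (m+1)) (Icc 0 R) := by
    have := intervalIntegral.continuousOn_primitive_interval
      (a := (0:ℝ)) (b := R) (μ := volume) (f := hf g F (m+1)) (by rwa [uIcc_of_le hR.le])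
    rwa [uIcc_of_le hR.le] at this
  -- phi continuous on Ioc 0 R
  have hphicont : ContinuousOn (phif g F (m+1)) (Ioc 0 R) := by
    apply ContinuousOn.mul
    · exact continuousOn_const.div (continuous_pow (m+1)).continuousOn
        (fun t ht => pow_ne_zero _ (ne_of_gt ht.1))
    · exact (Real.continuous_exp.comp_continuousOn
        ((hGcont.mono Ioc_subset_Icc_self).neg)).mul (hHcont.mono Ioc_subset_Icc_self)
  -- v equals the phi-integral on Ioc 0 R
  have hvw : ∀ ρ ∈ Ioc (0:ℝ) R, v ρ = ∫ t in ρ..R, phif g F (m+1) t := by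
    intro ρ hρ
    rw [hv ρ hρ]
    refine intervalIntegral.integral_congr fun t ht => ?_
    rw [uIcc_of_le hρ.2] at ht
    have ht0 : (0:ℝ) < t := lt_of_lt_of_le hρ.1 ht.1
    have htR : t ∈ Icc (0:ℝ) R := ⟨ht0.le, ht.2⟩
    have hinner : ∫ r in (0:ℝ)..t, Real.exp (∫ s in t..r, g s) * (F r * r ^ (m+1))
        = Real.exp (-Gf g t) * Hf g F (m+1) t := by
      have : ∀ r ∈ uIcc (0:ℝ) t,
          Real.exp (∫ s in t..r, g s) * (F r * r ^ (m+1))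
            = Real.exp (-Gf g t) * hf g F (m+1) r := by
        intro r hr
        rw [uIcc_of_le ht0.le] at hr
        have hrIcc : r ∈ Icc (0:ℝ) R := ⟨hr.1, hr.2.trans ht.2⟩
        have hsub : ∫ s in t..r, g s = Gf g r - Gf g t := by
          rw [Gf, Gf, intervalIntegral.integral_interval_sub_left
            (hIIg 0 ⟨le_rfl, hR.le⟩ r hrIcc) (hIIg 0 ⟨le_rfl, hR.le⟩ t htR)]
        rw [hsub, hf, sub_eq_add_neg, add_comm, Real.exp_add, mul_assoc]
      rw [intervalIntegral.integral_congr this, intervalIntegral.integral_const_mul, Hf]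
    rw [hinner, phif]
  -- v R = 0
  refine ⟨by rw [hvw R ⟨hR, le_rfl⟩, intervalIntegral.integral_same], ?_⟩
  -- derivative data
  have hGderiv : ∀ ρ ∈ Ioo (0:ℝ) R, HasDerivAt (Gf g) (g ρ) ρ := by
    intro ρ hρ
    have hmem : Ioc (0:ℝ) R ∈ nhds ρ :=
      Filter.mem_of_superset (Ioo_mem_nhds hρ.1 hρ.2) Ioo_subset_Ioc_self
    exact intervalIntegral.integral_hasDerivAt_right
      (hIIg 0 ⟨le_rfl, hR.le⟩ ρ ⟨hρ.1.le, hρ.2.le⟩)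
      ⟨Ioo 0 R, Ioo_mem_nhds hρ.1 hρ.2,
        (hg.mono Ioo_subset_Ioc_self).aestronglyMeasurable measurableSet_Ioo⟩
      ((hg ρ ⟨hρ.1, hρ.2.le⟩).continuousAt hmem)
  have hHderiv : ∀ ρ ∈ Ioo (0:ℝ) R, HasDerivAt (Hf g F (m+1)) (hf g F (m+1) ρ) ρ := by
    intro ρ hρ
    have hmem : Ioc (0:ℝ) R ∈ nhds ρ :=
      Filter.mem_of_superset (Ioo_mem_nhds hρ.1 hρ.2) Ioo_subset_Ioc_self
    have hhcont : ContinuousOn (hf g F (m+1)) (Ioc 0 R) := by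
      exact (Real.continuous_exp.comp_continuousOn
        (hGcont.mono Ioc_subset_Icc_self)).mul
        (hF.mul (continuous_pow (m+1)).continuousOn)
    exact intervalIntegral.integral_hasDerivAt_right
      (hIIh 0 ⟨le_rfl, hR.le⟩ ρ ⟨hρ.1.le, hρ.2.le⟩)
      ⟨Ioo 0 R, Ioo_mem_nhds hρ.1 hρ.2,
        (hhcont.mono Ioo_subset_Ioc_self).aestronglyMeasurable measurableSet_Ioo⟩
      ((hhcont ρ ⟨hρ.1, hρ.2.le⟩).continuousAt hmem)
  have hphideriv : ∀ ρ ∈ Ioo (0:ℝ) R, HasDerivAt (phif g F (m+1))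
      (-(↑(m + 1) * ρ ^ m) / (ρ ^ (m+1)) ^ 2 * (Real.exp (-Gf g ρ) * Hf g F (m+1) ρ) +
        (ρ ^ (m+1))⁻¹ * ((Real.exp (-Gf g ρ) * -(g ρ)) * Hf g F (m+1) ρ +
          Real.exp (-Gf g ρ) * hf g F (m+1) ρ)) ρ := by
    intro ρ hρ
    have hρ0 : ρ ≠ 0 := ne_of_gt hρ.1
    have h1 : HasDerivAt (fun t : ℝ => (t ^ (m+1))⁻¹)
        (-(↑(m + 1) * ρ ^ m) / (ρ ^ (m+1)) ^ 2) ρ := by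
      have := (hasDerivAt_pow (m+1) ρ).fun_inv (pow_ne_zero _ hρ0)
      simpa using this
    have hE : HasDerivAt (fun t => Real.exp (-Gf g t))
        (Real.exp (-Gf g ρ) * -(g ρ)) ρ := ((hGderiv ρ hρ).neg).exp
    have hA := hE.fun_mul (hHderiv ρ hρ)
    have := h1.fun_mul hA
    have heq : (fun t : ℝ => (t ^ (m+1))⁻¹ * (Real.exp (-Gf g t) * Hf g F (m+1) t))
        = phif g F (m+1) := by
      funext t; rw [phif, one_div]
    rw [heq] at this
    exact this
  -- the candidate derivatives
  refine ⟨fun ρ => -phif g F (m+1) ρ,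
    fun ρ => -(-(↑(m + 1) * ρ ^ m) / (ρ ^ (m+1)) ^ 2 * (Real.exp (-Gf g ρ) * Hf g F (m+1) ρ) +
        (ρ ^ (m+1))⁻¹ * ((Real.exp (-Gf g ρ) * -(g ρ)) * Hf g F (m+1) ρ +
          Real.exp (-Gf g ρ) * hf g F (m+1) ρ)), ?_, ?_, ?_⟩
  · intro ρ hρ
    have hw : HasDerivAt (fun u => ∫ t in u..R, phif g F (m+1) t) (-phif g F (m+1) ρ) ρ := by
      apply intervalIntegral.integral_hasDerivAt_left
      · apply (hphicont.mono _).intervalIntegrable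
        rw [uIcc_of_le hρ.2.le]
        exact fun x hx => ⟨lt_of_lt_of_le hρ.1 hx.1, hx.2⟩
      · exact ⟨Ioo 0 R, Ioo_mem_nhds hρ.1 hρ.2,
          ((hphicont.mono Ioo_subset_Ioc_self)).aestronglyMeasurable measurableSet_Ioo⟩
      · exact (hphideriv ρ hρ).continuousAt
    apply hw.congr_of_eventuallyEq
    exact Filter.eventuallyEq_of_mem (Ioo_mem_nhds hρ.1 hρ.2)
      (fun x hx => hvw x (Ioo_subset_Ioc_self hx))
  · intro ρ hρ
    exact (hphideriv ρ hρ).neg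
  · intro ρ hρ
    have hρ0 : ρ ≠ 0 := ne_of_gt hρ.1
    have hpow : ρ ^ (m+1) ≠ 0 := pow_ne_zero _ hρ0
    simp only [phif, hf, Real.exp_neg]
    have hexp : Real.exp (Gf g ρ) ≠ 0 := Real.exp_ne_zero _
    push_cast
    field_simp
    ring
end

section
/- Let H : ℝ^n → [0,∞) be a convex function, C¹ on ℝ^n∖{0}, with H(tξ) = |t|·H(ξ) for all t ∈ ℝ, ξ ∈ ℝ^n, and α|ξ| ≤ H(ξ) ≤ β|ξ| for some 0 < α ≤ β, and let H_0(x) = sup{⟨x,ξ⟩ : H(ξ) ≤ 1} be its polar. Then at every x ≠ 0 at which H_0 is differentiable: ∇H(∇H_0(x)) = x / H_0(x). -/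
open MeasureTheory Set Real

section Helpers

open scoped RealInnerProductSpace

variable {E : Type*} [NormedAddCommGroup E] [InnerProductSpace ℝ E] [CompleteSpace E]

/-- Gradient inequality for a convex function. -/
lemma aux_grad_ineq (f : E → ℝ) (hconv : ConvexOn ℝ Set.univ f) {x g : E}
    (hg : HasGradientAt f g x) (y : E) : f x + ⟪g, y - x⟫ ≤ f y := by
  set L : ℝ →ᵃ[ℝ] E := AffineMap.lineMap x y with hL
  have hψ : ConvexOn ℝ Set.univ (f ∘ L) := by
    have := hconv.comp_affineMap L
    simpa using this
  have hu : HasDerivAt (fun t : ℝ => L t) (y - x) 0 := by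
    have h1 : HasDerivAt (fun t : ℝ => t • (y - x) + x) ((1 : ℝ) • (y - x)) 0 :=
      ((hasDerivAt_id 0).smul_const (y - x)).add_const x
    simpa [hL, AffineMap.lineMap_apply] using h1
  have hd : HasDerivAt (f ∘ fun t : ℝ => L t) ⟪g, y - x⟫ 0 := by
    have hg2 : HasGradientAt f g (L 0) := by
      simpa [hL, AffineMap.lineMap_apply] using hg
    have := hg2.hasFDerivAt.comp_hasDerivAt 0 hu
    simpa using this
  have hslope := hψ.le_slope_of_hasDerivAt (Set.mem_univ 0) (Set.mem_univ 1) zero_lt_one hd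
  have heval : slope (f ∘ L) 0 1 = f y - f x := by
    simp [slope_def_field, hL, AffineMap.lineMap_apply]
  rw [heval] at hslope
  linarith

/-- Euler's relation at a point of differentiability of a positively 1-homogeneous function. -/
lemma aux_euler (f : E → ℝ) {v g : E} (hf : ∀ t : ℝ, 0 < t → f (t • v) = t * f v)
    (hg : HasGradientAt f g v) : ⟪g, v⟫ = f v := by
  have hu : HasDerivAt (fun t : ℝ => t • v) v 1 := by
    have h1 : HasDerivAt (fun t : ℝ => t • v) ((1 : ℝ) • v) 1 :=
      (hasDerivAt_id 1).smul_const v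
    simpa using h1
  have hg' : HasGradientAt f g ((1:ℝ) • v) := by rwa [one_smul]
  have hd : HasDerivAt (f ∘ fun t : ℝ => t • v) ⟪g, v⟫ 1 := by
    have := hg'.hasFDerivAt.comp_hasDerivAt 1 hu
    simpa using this
  have heq : (f ∘ fun t : ℝ => t • v) =ᶠ[nhds 1] (fun t : ℝ => t * f v) := by
    filter_upwards [eventually_gt_nhds zero_lt_one] with t ht
    simp [Function.comp, hf t ht]
  have hd' : HasDerivAt (fun t : ℝ => t * f v) ⟪g, v⟫ 1 :=
    hd.congr_of_eventuallyEq heq.symm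
  exact hd'.unique (hasDerivAt_mul_const (f v))

end Helpers

/-- **The gradient of the gauge at the gradient of the polar.**
If `H : ℝⁿ → [0,∞)` is convex, `C¹` away from the origin, `1`-homogeneous and comparable
to the norm, and `H₀` is its polar `H₀ x = sup {⟨x, ξ⟩ : H ξ ≤ 1}`, then at every point
`x ≠ 0` at which `H₀` is differentiable (with gradient `g`), one has
`∇H(∇H₀(x)) = x / H₀(x)`. -/
theorem stmt13 {n : ℕ} (hn : 2 ≤ n)
    (H H0 : EuclideanSpace ℝ (Fin n) → ℝ) (α β : ℝ) (hα : 0 < α) (hαβ : α ≤ β)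
    (hconv : ConvexOn ℝ Set.univ H)
    (hC1 : ContDiffOn ℝ 1 H ({(0 : EuclideanSpace ℝ (Fin n))}ᶜ))
    (hhom : ∀ (t : ℝ) (ξ : EuclideanSpace ℝ (Fin n)), H (t • ξ) = |t| * H ξ)
    (hlow : ∀ ξ, α * ‖ξ‖ ≤ H ξ) (hup : ∀ ξ, H ξ ≤ β * ‖ξ‖)
    (hH0 : ∀ x, H0 x = sSup ((fun ξ => (inner ℝ x ξ : ℝ)) '' {ξ | H ξ ≤ 1})) :
    ∀ x : EuclideanSpace ℝ (Fin n), x ≠ 0 →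
      ∀ g gH : EuclideanSpace ℝ (Fin n), HasGradientAt H0 g x → HasGradientAt H gH g →
        gH = (H0 x)⁻¹ • x := by
  classical
  set S : Set (EuclideanSpace ℝ (Fin n)) := {ξ | H ξ ≤ 1} with hS
  have hβ : (0:ℝ) < β := lt_of_lt_of_le hα hαβ
  have hH00 : H 0 = 0 := by
    have := hhom 0 0
    simpa using this
  have h0S : (0 : EuclideanSpace ℝ (Fin n)) ∈ S := by simp [hS, hH00]
  have hHpos : ∀ ξ : EuclideanSpace ℝ (Fin n), ξ ≠ 0 → 0 < H ξ := by
    intro ξ hξ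
    have h1 : (0:ℝ) < α * ‖ξ‖ := by
      have : (0:ℝ) < ‖ξ‖ := norm_pos_iff.mpr hξ
      positivity
    linarith [hlow ξ]
  have hbdd : ∀ x : EuclideanSpace ℝ (Fin n),
      BddAbove ((fun ξ => (inner ℝ x ξ : ℝ)) '' S) := by
    intro x
    refine ⟨‖x‖ * α⁻¹, ?_⟩
    rintro r ⟨ξ, hξ, rfl⟩
    have hn2 : ‖ξ‖ ≤ α⁻¹ := by
      have h1 : α * ‖ξ‖ ≤ 1 := le_trans (hlow ξ) hξ
      calc ‖ξ‖ = α⁻¹ * (α * ‖ξ‖) := by field_simp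
        _ ≤ α⁻¹ * 1 := mul_le_mul_of_nonneg_left h1 (le_of_lt (inv_pos.mpr hα))
        _ = α⁻¹ := mul_one _
    calc (inner ℝ x ξ : ℝ) ≤ ‖x‖ * ‖ξ‖ := real_inner_le_norm x ξ
      _ ≤ ‖x‖ * α⁻¹ := mul_le_mul_of_nonneg_left hn2 (norm_nonneg x)
  have hmem_le : ∀ (x : EuclideanSpace ℝ (Fin n)), ∀ ξ ∈ S, (inner ℝ x ξ : ℝ) ≤ H0 x := by
    intro x ξ hξ
    rw [hH0 x]
    exact le_csSup (hbdd x) (Set.mem_image_of_mem _ hξ)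
  have hne : ∀ x : EuclideanSpace ℝ (Fin n), ((fun ξ => (inner ℝ x ξ : ℝ)) '' S).Nonempty :=
    fun x => ⟨inner ℝ x 0, Set.mem_image_of_mem _ h0S⟩
  have hpolar : ∀ (x ξ : EuclideanSpace ℝ (Fin n)), (inner ℝ x ξ : ℝ) ≤ H0 x * H ξ := by
    intro x ξ
    rcases eq_or_ne ξ 0 with rfl | hξ0
    · simp [hH00]
    · have hHξ : 0 < H ξ := hHpos ξ hξ0
      have hmem : (H ξ)⁻¹ • ξ ∈ S := by
        have h2 : H ((H ξ)⁻¹ • ξ) = |(H ξ)⁻¹| * H ξ := hhom _ _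
        rw [hS]
        simp only [Set.mem_setOf_eq, h2, abs_of_pos (inv_pos.mpr hHξ)]
        rw [inv_mul_cancel₀ (ne_of_gt hHξ)]
      have h1 := hmem_le x _ hmem
      rw [real_inner_smul_right] at h1
      calc (inner ℝ x ξ : ℝ) = H ξ * ((H ξ)⁻¹ * inner ℝ x ξ) := by field_simp
        _ ≤ H ξ * H0 x := mul_le_mul_of_nonneg_left h1 (le_of_lt hHξ)
        _ = H0 x * H ξ := mul_comm _ _
  have hH0pos : ∀ x : EuclideanSpace ℝ (Fin n), x ≠ 0 → 0 < H0 x := by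
    intro x hx
    have hxn : (0:ℝ) < ‖x‖ := norm_pos_iff.mpr hx
    have hmem : (β * ‖x‖)⁻¹ • x ∈ S := by
      rw [hS]
      simp only [Set.mem_setOf_eq]
      refine le_trans (hup _) ?_
      rw [norm_smul]
      simp only [norm_inv, Real.norm_eq_abs]
      rw [abs_of_pos (by positivity : (0:ℝ) < β * ‖x‖)]
      rw [mul_inv]
      field_simp
      norm_num
    have h1 := hmem_le x _ hmem
    rw [real_inner_smul_right, real_inner_self_eq_norm_sq] at h1
    have hpos : (0:ℝ) < (β * ‖x‖)⁻¹ * ‖x‖ ^ 2 := by positivity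
    linarith
  -- positive homogeneity of H0
  have hH0hom : ∀ (t : ℝ), 0 < t → ∀ x : EuclideanSpace ℝ (Fin n),
      H0 (t • x) = t * H0 x := by
    intro t ht x
    apply le_antisymm
    · rw [hH0 (t • x)]
      apply csSup_le (hne _)
      rintro r ⟨ξ, hξ, rfl⟩
      simp only [real_inner_smul_left]
      exact mul_le_mul_of_nonneg_left (hmem_le x ξ hξ) ht.le
    · have key : H0 x ≤ t⁻¹ * H0 (t • x) := by
        rw [hH0 x]
        apply csSup_le (hne _)
        rintro r ⟨ξ, hξ, rfl⟩
        have h1 := hmem_le (t • x) ξ hξ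
        rw [real_inner_smul_left] at h1
        have : (inner ℝ x ξ : ℝ) ≤ t⁻¹ * (t * inner ℝ x ξ) := by
          field_simp
          exact le_refl _
        refine le_trans this ?_
        exact mul_le_mul_of_nonneg_left h1 (by positivity)
      calc t * H0 x ≤ t * (t⁻¹ * H0 (t • x)) :=
            mul_le_mul_of_nonneg_left key ht.le
        _ = H0 (t • x) := by field_simp
  -- convexity of H0
  have hconv0 : ConvexOn ℝ Set.univ H0 := by
    refine ⟨convex_univ, ?_⟩
    intro x _ y _ a b ha hb hab
    rw [hH0 (a • x + b • y)]
    apply csSup_le (hne _)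
    rintro r ⟨ξ, hξ, rfl⟩
    show (inner ℝ (a • x + b • y) ξ : ℝ) ≤ a • H0 x + b • H0 y
    rw [inner_add_left, real_inner_smul_left, real_inner_smul_left, smul_eq_mul, smul_eq_mul]
    exact add_le_add (mul_le_mul_of_nonneg_left (hmem_le x ξ hξ) ha)
      (mul_le_mul_of_nonneg_left (hmem_le y ξ hξ) hb)
  -- main argument
  intro x hx g gH hg hgH
  have hH0x : 0 < H0 x := hH0pos x hx
  have hEuler0 : (inner ℝ g x : ℝ) = H0 x :=
    aux_euler H0 (fun t ht => hH0hom t ht x) hg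
  have hgrad0 : ∀ y, (inner ℝ g y : ℝ) ≤ H0 y := by
    intro y
    have := aux_grad_ineq H0 hconv0 hg y
    rw [inner_sub_right] at this
    linarith [hEuler0, this]
  have hg0 : g ≠ 0 := by
    intro h
    rw [h] at hEuler0
    simp at hEuler0
    linarith
  have hEulerH : (inner ℝ gH g : ℝ) = H g := by
    refine aux_euler H (fun t ht => ?_) hgH
    rw [hhom t g, abs_of_pos ht]
  have hgradH : ∀ ξ, (inner ℝ gH ξ : ℝ) ≤ H ξ := by
    intro ξ
    have := aux_grad_ineq H hconv hgH ξ
    rw [inner_sub_right] at this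
    linarith [hEulerH, this]
  have hH0gH : H0 gH ≤ 1 := by
    rw [hH0 gH]
    apply csSup_le (hne _)
    rintro r ⟨ξ, hξ, rfl⟩
    exact le_trans (hgradH ξ) hξ
  have hHg_le : H g ≤ 1 := by
    have h1 : (inner ℝ g gH : ℝ) ≤ H0 gH := hgrad0 gH
    rw [real_inner_comm] at h1
    linarith [hEulerH]
  have hHg_ge : 1 ≤ H g := by
    have h1 : (inner ℝ x g : ℝ) ≤ H0 x * H g := hpolar x g
    rw [real_inner_comm, hEuler0] at h1
    nlinarith
  have hHg : H g = 1 := le_antisymm hHg_le hHg_ge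
  -- local minimum argument
  set c : ℝ := (H0 x)⁻¹ with hc
  set φ : EuclideanSpace ℝ (Fin n) → ℝ := fun ξ => H ξ - c * inner ℝ x ξ with hφ
  have hφnonneg : ∀ ξ, 0 ≤ φ ξ := by
    intro ξ
    have h1 := hpolar x ξ
    have h2 : c * (inner ℝ x ξ : ℝ) ≤ c * (H0 x * H ξ) :=
      mul_le_mul_of_nonneg_left h1 (by positivity)
    have h3 : c * (H0 x * H ξ) = H ξ := by
      rw [hc]; field_simp
    simp only [hφ]
    linarith
  have hφg : φ g = 0 := by
    simp only [hφ]
    rw [real_inner_comm, hEuler0, hHg, hc]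
    field_simp
    norm_num
  have hmin : IsLocalMin φ g := by
    apply Filter.Eventually.of_forall
    intro ξ
    rw [hφg]
    exact hφnonneg ξ
  have hlin : HasFDerivAt (fun ξ : EuclideanSpace ℝ (Fin n) => c * (inner ℝ x ξ : ℝ))
      (c • (InnerProductSpace.toDual ℝ (EuclideanSpace ℝ (Fin n)) x : EuclideanSpace ℝ (Fin n) →L[ℝ] ℝ)) g := by
    have h1 : HasFDerivAt (fun ξ : EuclideanSpace ℝ (Fin n) =>
        (InnerProductSpace.toDual ℝ (EuclideanSpace ℝ (Fin n)) x) ξ)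
        (InnerProductSpace.toDual ℝ (EuclideanSpace ℝ (Fin n)) x : EuclideanSpace ℝ (Fin n) →L[ℝ] ℝ) g :=
      (InnerProductSpace.toDual ℝ (EuclideanSpace ℝ (Fin n)) x :
        EuclideanSpace ℝ (Fin n) →L[ℝ] ℝ).hasFDerivAt
    have h2 := h1.const_mul c
    simpa [InnerProductSpace.toDual_apply_apply] using h2
  have hφderiv : HasFDerivAt φ
      ((InnerProductSpace.toDual ℝ (EuclideanSpace ℝ (Fin n)) gH : EuclideanSpace ℝ (Fin n) →L[ℝ] ℝ)
        - c • (InnerProductSpace.toDual ℝ (EuclideanSpace ℝ (Fin n)) x : EuclideanSpace ℝ (Fin n) →L[ℝ] ℝ)) g := by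
    have h1 : HasFDerivAt H
        (InnerProductSpace.toDual ℝ (EuclideanSpace ℝ (Fin n)) gH : EuclideanSpace ℝ (Fin n) →L[ℝ] ℝ) g :=
      hgH.hasFDerivAt
    exact h1.sub hlin
  have hzero := hmin.hasFDerivAt_eq_zero hφderiv
  apply ext_inner_right ℝ
  intro v
  have := congrArg (fun L : EuclideanSpace ℝ (Fin n) →L[ℝ] ℝ => L v) hzero
  simp only [ContinuousLinearMap.sub_apply, ContinuousLinearMap.smul_apply,
    InnerProductSpace.toDual_apply_apply, ContinuousLinearMap.zero_apply, smul_eq_mul] at this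
  rw [real_inner_smul_left]
  linarith
end

section
/- Let H : ℝ^n → [0,∞) be a convex function, C¹ on ℝ^n∖{0}, with H(tξ) = |t|·H(ξ) for all t ∈ ℝ, ξ ∈ ℝ^n, and α|ξ| ≤ H(ξ) ≤ β|ξ| for some 0 < α ≤ β, let H_0(x) = sup{⟨x,ξ⟩ : H(ξ) ≤ 1} be its polar and κ_n = |{H_0 ≤ 1}|. Let R > 0, let w : [0,R] → ℝ be C¹, and set v(x) = w(H_0(x)). Then v is locally Lipschitz on {x : 0 < H_0(x) < R}, and for every q > 0: ∫_{{x : H_0(x) < R}} H(∇v(x))^q dx = n κ_n ∫_0^R |w'(ρ)|^q ρ^{n−1} dρ, where ∇v denotes the a.e.-defined gradient of v. -/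
open MeasureTheory Set Real
open scoped ENNReal NNReal Pointwise

lemma coarea_aux {n : ℕ} (hn : 1 ≤ n) (N : EuclideanSpace ℝ (Fin n) → ℝ)
    (hcont : Continuous N)
    (hhomN : ∀ t : ℝ, 0 < t → ∀ x, N (t • x) = t * N x)
    (c : ℝ) (hc : 0 < c) (hlowN : ∀ x, c * ‖x‖ ≤ N x)
    (f : ℝ → ℝ) (hf : Continuous f) (R : ℝ) (hR : 0 < R) :
    ∫ x in {x | N x < R}, f (N x) ∂volume
      = ∫ ρ in Set.Ioo (0:ℝ) R,
          ((volume {x | N x ≤ 1}).toReal * n * ρ^(n-1)) * f ρ ∂volume := by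
  set κ' : ℝ≥0∞ := volume {x | N x ≤ 1} with hκ'
  set κt : ℝ := κ'.toReal with hκt
  have hNnonneg : ∀ x, 0 ≤ N x := by
    intro x
    exact le_trans (by positivity) (hlowN x)
  have hκfin : κ' ≠ ∞ := by
    have hsub : {x | N x ≤ 1} ⊆ Metric.closedBall 0 c⁻¹ := by
      intro x hx
      simp only [Metric.mem_closedBall, dist_zero_right]
      rw [show c⁻¹ = 1 / c by ring, le_div_iff₀ hc, mul_comm]
      exact (hlowN x).trans hx
    exact ((measure_mono hsub).trans_lt measure_closedBall_lt_top).ne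
  have hκofReal : ENNReal.ofReal κt = κ' := ENNReal.ofReal_toReal hκfin
  have hκtnn : 0 ≤ κt := ENNReal.toReal_nonneg
  have hmeasN : Measurable N := hcont.measurable
  haveI : Nonempty (Fin n) := ⟨⟨0, by omega⟩⟩
  have hzero : volume {x | N x ≤ 0} = 0 := by
    have hss : {x : EuclideanSpace ℝ (Fin n) | N x ≤ 0} ⊆ {0} := by
      intro x hx
      simp only [mem_singleton_iff]
      by_contra hx0
      have := hlowN x
      have hxn : 0 < ‖x‖ := norm_pos_iff.mpr hx0
      have h1 : 0 < c * ‖x‖ := by positivity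
      exact absurd (le_trans this hx) (by linarith)
    exact measure_mono_null hss (measure_singleton 0)
  have key : ∀ r : ℝ, 0 ≤ r → volume {x | N x ≤ r} = ENNReal.ofReal (r^n) * κ' := by
    intro r hr
    rcases eq_or_lt_of_le hr with h | h
    · rw [← h]
      rw [zero_pow (by omega), ENNReal.ofReal_zero, zero_mul]
      exact hzero
    · have hset : {x | N x ≤ r} = r • {x | N x ≤ 1} := by
        ext x
        rw [mem_smul_set_iff_inv_smul_mem₀ h.ne']
        simp only [mem_setOf_eq]
        rw [hhomN r⁻¹ (by positivity) x]
        rw [inv_mul_le_one₀ h]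
      rw [hset, Measure.addHaar_smul_of_nonneg volume hr, finrank_euclideanSpace_fin]
  set ν : Measure ℝ := volume.map N with hν
  have hνIic : ∀ r : ℝ, 0 ≤ r → ν (Iic r) = ENNReal.ofReal (r^n) * κ' := by
    intro r hr
    rw [hν, Measure.map_apply hmeasN measurableSet_Iic]
    exact key r hr
  have hνIic0 : ν (Iic 0) = 0 := by
    rw [hν, Measure.map_apply hmeasN measurableSet_Iic]
    exact hzero
  set d : ℝ → ℝ≥0 := fun ρ => Real.toNNReal (κt * n * ρ^(n-1)) with hd
  have hdmeas : Measurable d := by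
    apply Measurable.real_toNNReal
    fun_prop
  -- the measure equality
  have Q : ν.restrict (Ioi 0)
      = (volume.restrict (Ioi 0)).withDensity (fun ρ => (d ρ : ℝ≥0∞)) := by
    apply Measure.ext_of_Ioc' _ _
    · intro a b hab
      have h1 : Ioc a b ∩ Ioi 0 ⊆ Iic (max b 1) := fun x hx =>
        le_trans hx.1.2 (le_max_left _ _)
      rw [Measure.restrict_apply measurableSet_Ioc]
      refine ((measure_mono h1).trans_lt ?_).ne
      rw [hνIic _ (by positivity)]
      exact ENNReal.mul_lt_top ENNReal.ofReal_lt_top hκfin.lt_top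
    · intro a b hab
      rw [Measure.restrict_apply measurableSet_Ioc,
        withDensity_apply _ measurableSet_Ioc,
        Measure.restrict_restrict measurableSet_Ioc]
      rcases le_or_gt b 0 with hb | hb
      · have : Ioc a b ∩ Ioi 0 = ∅ := by
          ext x; simp only [mem_inter_iff, mem_Ioc, mem_Ioi, mem_empty_iff_false, iff_false]
          rintro ⟨⟨_, h2⟩, h3⟩; linarith
        rw [this]; simp
      · set a' : ℝ := max a 0 with ha'
        have ha'0 : 0 ≤ a' := le_max_right _ _
        have ha'b : a' ≤ b := max_le hab.le hb.le
        have hseteq : Ioc a b ∩ Ioi 0 = Ioc a' b := by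
          ext x
          simp only [mem_inter_iff, mem_Ioc, mem_Ioi, ha', max_lt_iff]
          tauto
        rw [hseteq]
        -- LHS : ν (Ioc a' b)
        have hsplit : ν (Iic a') + ν (Ioc a' b) = ν (Iic b) := by
          rw [← measure_union (by exact Iic_disjoint_Ioc le_rfl) measurableSet_Ioc]
          rw [Iic_union_Ioc_eq_Iic ha'b]
        have hIica' : ν (Iic a') = ENNReal.ofReal (a'^n * κt) := by
          rw [hνIic _ ha'0, ← hκofReal, ← ENNReal.ofReal_mul (pow_nonneg ha'0 n)]
        have hIicb : ν (Iic b) = ENNReal.ofReal (b^n * κt) := by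
          rw [hνIic _ hb.le, ← hκofReal, ← ENNReal.ofReal_mul (pow_nonneg hb.le n)]
        -- RHS density integral
        have hcont' : Continuous fun ρ : ℝ => κt * n * ρ^(n-1) := by fun_prop
        have hRHS : ∫⁻ ρ in Ioc a' b, (d ρ : ℝ≥0∞) ∂volume
            = ENNReal.ofReal (κt * (b^n - a'^n)) := by
          have hnn : 0 ≤ᵐ[volume.restrict (Ioc a' b)] fun ρ => κt * n * ρ^(n-1) := by
            filter_upwards [ae_restrict_mem measurableSet_Ioc] with ρ hρ
            have : (0:ℝ) < ρ := lt_of_le_of_lt ha'0 hρ.1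
            positivity
          have hint : IntegrableOn (fun ρ => κt * n * ρ^(n-1)) (Ioc a' b) volume :=
            hcont'.integrableOn_Ioc
          have := ofReal_integral_eq_lintegral_ofReal hint hnn
          have hcongr : ∀ ρ : ℝ, (d ρ : ℝ≥0∞) = ENNReal.ofReal (κt * n * ρ^(n-1)) := by
            intro ρ; rw [hd]; simp [ENNReal.ofReal]
          simp_rw [hcongr]
          rw [← this]
          congr 1
          rw [← intervalIntegral.integral_of_le ha'b]
          rw [intervalIntegral.integral_const_mul, integral_pow]
          have : n - 1 + 1 = n := by omega
          rw [this]
          field_simp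
          push_cast [Nat.cast_sub hn]; ring
        rw [hRHS]
        have hpowle : a'^n ≤ b^n := pow_le_pow_left₀ ha'0 ha'b n
        have : ν (Iic a') + ENNReal.ofReal (κt * (b^n - a'^n)) = ν (Iic b) := by
          rw [hIica', hIicb, ← ENNReal.ofReal_add (mul_nonneg (pow_nonneg ha'0 n) hκtnn)
            (mul_nonneg hκtnn (by linarith))]
          congr 1
          ring
        have hfin : ν (Iic a') ≠ ∞ := by rw [hIica']; exact ENNReal.ofReal_ne_top
        rw [← hsplit] at this
        exact (ENNReal.add_right_inj hfin).mp this |>.symm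
  -- now the integral computation
  have h1 : ∫ x in {x | N x < R}, f (N x) ∂volume = ∫ ρ in Iio R, f ρ ∂ν := by
    rw [hν, setIntegral_map measurableSet_Iio hf.aestronglyMeasurable hmeasN.aemeasurable]
    rfl
  rw [h1]
  have h2 : (Iio R : Set ℝ) =ᵐ[ν] Ioo 0 R := by
    rw [MeasureTheory.ae_eq_set]
    constructor
    · refine measure_mono_null ?_ hνIic0
      intro x hx
      simp only [mem_diff, mem_Iio, mem_Ioo, not_and] at hx
      simp only [mem_Iic]
      by_contra hx0
      push_neg at hx0
      exact absurd (hx.2 hx0) (by simp [hx.1])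
    · refine measure_mono_null ?_ (measure_empty (μ := ν))
      intro x hx
      exact absurd hx.1.2 (by simpa using hx.2)
  rw [setIntegral_congr_set h2]
  have h3 : ν.restrict (Ioo 0 R) = (volume.restrict (Ioo 0 R)).withDensity
      (fun ρ => (d ρ : ℝ≥0∞)) := by
    have hsub : Ioo (0:ℝ) R ∩ Ioi 0 = Ioo 0 R :=
      inter_eq_self_of_subset_left Ioo_subset_Ioi_self
    rw [← hsub, ← Measure.restrict_restrict measurableSet_Ioo, Q,
      restrict_withDensity measurableSet_Ioo,
      Measure.restrict_restrict measurableSet_Ioo]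
  rw [h3, integral_withDensity_eq_integral_smul hdmeas]
  refine setIntegral_congr_fun measurableSet_Ioo fun ρ hρ => ?_
  have hρ0 : (0:ℝ) < ρ := hρ.1
  rw [NNReal.smul_def, hd]
  rw [Real.coe_toNNReal _ (by positivity)]
  rfl


/-- **Gauge energy of a convexly symmetric function.**
Let `H` be a gauge (convex, `C¹` away from `0`, `1`-homogeneous, comparable to the norm)
with polar `H₀` and `κₙ = |{H₀ ≤ 1}|`. Let `R > 0`, let `w : [0,R] → ℝ` be `C¹` with
derivative `w'`, and set `v(x) = w(H₀(x))`. Then `v` is locally Lipschitz on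
`{0 < H₀ < R}`, and for every `q > 0`,
`∫_{H₀(x) < R} H(∇v(x))^q dx = n κₙ ∫₀^R |w'(ρ)|^q ρ^{n-1} dρ`,
where `∇v` is the a.e.-defined gradient of `v`. -/
theorem stmt15 {n : ℕ} (hn : 2 ≤ n)
    (H H0 : EuclideanSpace ℝ (Fin n) → ℝ) (α β : ℝ) (hα : 0 < α) (hαβ : α ≤ β)
    (hconv : ConvexOn ℝ Set.univ H)
    (hC1 : ContDiffOn ℝ 1 H ({(0 : EuclideanSpace ℝ (Fin n))}ᶜ))
    (hhom : ∀ (t : ℝ) (ξ : EuclideanSpace ℝ (Fin n)), H (t • ξ) = |t| * H ξ)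
    (hlow : ∀ ξ, α * ‖ξ‖ ≤ H ξ) (hup : ∀ ξ, H ξ ≤ β * ‖ξ‖)
    (hH0 : ∀ x, H0 x = sSup ((fun ξ => (inner ℝ x ξ : ℝ)) '' {ξ | H ξ ≤ 1}))
    (κ : ℝ) (hκ : κ = (volume {x | H0 x ≤ 1}).toReal)
    (R : ℝ) (hR : 0 < R) (w w' : ℝ → ℝ)
    (hw : ContDiffOn ℝ 1 w (Set.Icc 0 R))
    (hw' : ∀ ρ ∈ Set.Icc (0 : ℝ) R, HasDerivWithinAt w (w' ρ) (Set.Icc 0 R) ρ)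
    (v : EuclideanSpace ℝ (Fin n) → ℝ) (hv : ∀ x, v x = w (H0 x)) :
    (∀ x : EuclideanSpace ℝ (Fin n), 0 < H0 x → H0 x < R →
      ∃ s ∈ nhds x, ∃ L : NNReal, LipschitzOnWith L v s) ∧
    ∀ q : ℝ, 0 < q →
      ∀ Dv : EuclideanSpace ℝ (Fin n) → EuclideanSpace ℝ (Fin n),
        (∀ᵐ x ∂volume, H0 x < R → HasGradientAt v (Dv x) x) →
        ∫ x in {x | H0 x < R}, H (Dv x) ^ q
          = (n : ℝ) * κ * ∫ ρ in (0 : ℝ)..R, |w' ρ| ^ q * ρ ^ (n - 1) := by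
  haveI : Nonempty (Fin n) := ⟨⟨0, by omega⟩⟩
  have hβ : 0 < β := lt_of_lt_of_le hα hαβ
  set S : Set (EuclideanSpace ℝ (Fin n)) := {ξ | H ξ ≤ 1} with hSdef
  have hveq : v = w ∘ H0 := funext hv
  -- basic facts about H
  have hH00 : H 0 = 0 := by
    have := hhom 0 0
    simpa using this
  have hHnonneg : ∀ ξ, 0 ≤ H ξ := fun ξ => le_trans (by positivity) (hlow ξ)
  have hHcont : Continuous H := by
    rw [continuous_iff_continuousAt]
    intro x
    by_cases hx : x = 0
    · subst hx
      rw [ContinuousAt, hH00]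
      apply squeeze_zero hHnonneg hup
      have : Continuous fun ξ : EuclideanSpace ℝ (Fin n) => β * ‖ξ‖ := by fun_prop
      simpa using this.tendsto 0
    · exact hC1.continuousOn.continuousAt (compl_singleton_mem_nhds hx)
  have h0S : (0 : EuclideanSpace ℝ (Fin n)) ∈ S := by simp [hSdef, hH00]
  have hSsub : S ⊆ Metric.closedBall 0 α⁻¹ := by
    intro ξ hξ
    simp only [Metric.mem_closedBall, dist_zero_right]
    rw [show α⁻¹ = 1 / α by ring, le_div_iff₀ hα, mul_comm]
    exact (hlow ξ).trans hξ
  have hScomp : IsCompact S := by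
    refine (Metric.isCompact_of_isClosed_isBounded ?_ ?_)
    · exact isClosed_le hHcont continuous_const
    · exact (Metric.isBounded_closedBall (x := (0:EuclideanSpace ℝ (Fin n))) (r := α⁻¹)).subset hSsub
  -- facts about H0
  have hbdd : ∀ x : EuclideanSpace ℝ (Fin n), BddAbove ((fun ξ => (inner ℝ x ξ : ℝ)) '' S) := by
    intro x
    exact (hScomp.image ((innerSL ℝ x).continuous : Continuous fun ξ => (inner ℝ x ξ : ℝ))).bddAbove
  have hle : ∀ x ξ, ξ ∈ S → (inner ℝ x ξ : ℝ) ≤ H0 x := by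
    intro x ξ hξ
    rw [hH0 x]
    exact le_csSup (hbdd x) (mem_image_of_mem _ hξ)
  have hattain : ∀ x : EuclideanSpace ℝ (Fin n), ∃ ξ ∈ S, (inner ℝ x ξ : ℝ) = H0 x := by
    intro x
    obtain ⟨ξ, hξS, hmax⟩ := hScomp.exists_isMaxOn ⟨0, h0S⟩
      ((innerSL ℝ x).continuous : Continuous fun ξ => (inner ℝ x ξ : ℝ)).continuousOn
    refine ⟨ξ, hξS, ?_⟩
    rw [hH0 x]
    refine (IsGreatest.csSup_eq ⟨mem_image_of_mem _ hξS, ?_⟩).symm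
    rintro y ⟨ζ, hζ, rfl⟩
    exact hmax hζ
  have hup0 : ∀ x : EuclideanSpace ℝ (Fin n), H0 x ≤ α⁻¹ * ‖x‖ := by
    intro x
    rw [hH0 x]
    apply Real.sSup_le
    · rintro y ⟨ζ, hζ, rfl⟩
      calc (inner ℝ x ζ : ℝ) ≤ ‖x‖ * ‖ζ‖ := real_inner_le_norm x ζ
      _ ≤ ‖x‖ * α⁻¹ := by
          refine mul_le_mul_of_nonneg_left ?_ (norm_nonneg x)
          have := hSsub hζ
          simpa [dist_zero_right] using this
      _ = α⁻¹ * ‖x‖ := mul_comm _ _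
    · positivity
  have hlow0 : ∀ x : EuclideanSpace ℝ (Fin n), β⁻¹ * ‖x‖ ≤ H0 x := by
    intro x
    by_cases hx : x = 0
    · subst hx
      simpa using hle 0 0 h0S
    · have hxn : 0 < ‖x‖ := norm_pos_iff.mpr hx
      set ξ : EuclideanSpace ℝ (Fin n) := (β * ‖x‖)⁻¹ • x with hξdef
      have hξS : ξ ∈ S := by
        simp only [hSdef, mem_setOf_eq, hξdef]
        rw [hhom]
        have h1 : H x ≤ β * ‖x‖ := hup x
        rw [abs_of_nonneg (by positivity)]
        rw [inv_mul_le_one₀ (by positivity)]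
        exact h1
      have := hle x ξ hξS
      rw [hξdef, real_inner_smul_right, real_inner_self_eq_norm_sq] at this
      calc β⁻¹ * ‖x‖ = (β * ‖x‖)⁻¹ * (‖x‖ ^ 2) := by field_simp
      _ ≤ H0 x := this
  have h0nonneg : ∀ x : EuclideanSpace ℝ (Fin n), 0 ≤ H0 x := fun x => le_trans (by positivity) (hlow0 x)
  have h0eq0 : ∀ x : EuclideanSpace ℝ (Fin n), H0 x = 0 → x = 0 := by
    intro x hx
    by_contra hx0
    have hxn : 0 < ‖x‖ := norm_pos_iff.mpr hx0
    have := hlow0 x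
    rw [hx] at this
    have hβi : (0:ℝ) < β⁻¹ := by positivity
    nlinarith
  have hsub0 : ∀ x y : EuclideanSpace ℝ (Fin n), H0 (x + y) ≤ H0 x + H0 y := by
    intro x y
    obtain ⟨ξ, hξS, hξ⟩ := hattain (x + y)
    rw [← hξ, inner_add_left]
    exact add_le_add (hle x ξ hξS) (hle y ξ hξS)
  have hlip : LipschitzWith ⟨α⁻¹, by positivity⟩ H0 := by
    apply LipschitzWith.of_dist_le_mul
    intro x y
    rw [Real.dist_eq, abs_sub_le_iff]
    have k1 : ∀ a b : EuclideanSpace ℝ (Fin n), H0 a - H0 b ≤ α⁻¹ * dist a b := by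
      intro a b
      have h1 : H0 a ≤ H0 b + H0 (a - b) := by
        have := hsub0 b (a - b)
        simpa using this
      have h2 : H0 (a - b) ≤ α⁻¹ * ‖a - b‖ := hup0 _
      rw [dist_eq_norm]
      push_cast
      linarith
    constructor
    · exact_mod_cast k1 x y
    · have := k1 y x
      rw [dist_comm] at this
      exact_mod_cast this
  have hcont0 : Continuous H0 := hlip.continuous
  have hhom0 : ∀ t : ℝ, 0 < t → ∀ x : EuclideanSpace ℝ (Fin n), H0 (t • x) = t * H0 x := by
    intro t ht x
    apply le_antisymm
    · obtain ⟨ξ, hξS, hξ⟩ := hattain (t • x)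
      rw [← hξ, real_inner_smul_left]
      exact mul_le_mul_of_nonneg_left (hle x ξ hξS) ht.le
    · obtain ⟨ξ, hξS, hξ⟩ := hattain x
      calc t * H0 x = (inner ℝ (t • x) ξ : ℝ) := by rw [real_inner_smul_left, hξ]
      _ ≤ H0 (t • x) := hle _ ξ hξS
  -- continuity of w'
  have hw'cont : ContinuousOn w' (Icc 0 R) := by
    have h2 : ContinuousOn (derivWithin w (Icc 0 R)) (Icc 0 R) :=
      hw.continuousOn_derivWithin (uniqueDiffOn_Icc hR) le_rfl
    refine h2.congr fun ρ hρ => ?_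
    exact ((hw' ρ hρ).derivWithin ((uniqueDiffOn_Icc hR) ρ hρ)).symm
  constructor
  · -- Lipschitz part
    intro x hx0 hxR
    refine ⟨{y | H0 y < R}, (isOpen_lt hcont0 continuous_const).mem_nhds hxR, ?_⟩
    obtain ⟨ρ₀, hρ₀, hmax⟩ := isCompact_Icc.exists_isMaxOn (f := fun ρ => ‖w' ρ‖)
      ⟨0, by simp [hR.le]⟩ hw'cont.norm
    set M : ℝ≥0 := ‖w' ρ₀‖₊ with hM
    have hwlip : LipschitzOnWith M w (Icc 0 R) := by
      apply Convex.lipschitzOnWith_of_nnnorm_hasDerivWithin_le (convex_Icc 0 R)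
        (fun ρ hρ => hw' ρ hρ)
      intro ρ hρ
      have := hmax hρ
      simpa [hM, ← NNReal.coe_le_coe] using this
    refine ⟨M * ⟨α⁻¹, by positivity⟩, ?_⟩
    rw [hveq]
    apply LipschitzOnWith.comp hwlip hlip.lipschitzOnWith
    intro y hy
    exact ⟨h0nonneg y, le_of_lt hy⟩
  · -- integral part
    intro q hq Dv hDv
    set W : ℝ → ℝ := fun ρ => |w' (max 0 (min ρ R))| with hW
    have hWcont : Continuous W := by
      apply continuous_abs.comp
      apply hw'cont.comp_continuous (by fun_prop)
      intro ρ
      constructor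
      · exact le_max_left 0 _
      · exact max_le hR.le (min_le_right _ _)
    have hWeq : ∀ ρ ∈ Icc (0:ℝ) R, W ρ = |w' ρ| := by
      intro ρ hρ
      simp only [hW]
      rw [min_eq_left hρ.2, max_eq_right hρ.1]
    have hfcont : Continuous fun ρ => W ρ ^ q :=
      hWcont.rpow_const fun ρ => Or.inr hq.le
    -- almost-everywhere identification of the integrand
    have hrad : ∀ᵐ x ∂(volume : Measure (EuclideanSpace ℝ (Fin n))), DifferentiableAt ℝ H0 x :=
      hlip.ae_differentiableAt
    have h0ae : ∀ᵐ x ∂(volume : Measure (EuclideanSpace ℝ (Fin n))), x ≠ 0 := by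
      rw [ae_iff]
      have : {x : EuclideanSpace ℝ (Fin n) | ¬x ≠ 0} = {0} := by ext y; simp
      rw [this]
      exact measure_singleton 0
    have hae : ∀ᵐ x ∂(volume : Measure (EuclideanSpace ℝ (Fin n))),
        x ∈ {x : EuclideanSpace ℝ (Fin n) | H0 x < R} → H (Dv x) ^ q = W (H0 x) ^ q := by
      filter_upwards [hDv, hrad, h0ae] with x hgrad hdiff hx0
      intro hxR
      have hxpos : 0 < H0 x := by
        rcases (h0nonneg x).lt_or_eq with h | h
        · exact h
        · exact absurd (h0eq0 x h.symm) hx0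
      obtain ⟨ξs, hξS, hξeq⟩ := hattain x
      -- the gradient of H0 at x is ξs
      have hfderiv : fderiv ℝ H0 x = innerSL ℝ ξs := by
        set g : EuclideanSpace ℝ (Fin n) → ℝ := fun y => H0 y - innerSL ℝ ξs y with hg
        have hgmin : IsLocalMin g x := by
          apply Filter.Eventually.of_forall
          intro y
          simp only [hg, innerSL_apply_apply]
          have h1 : (inner ℝ ξs y : ℝ) ≤ H0 y := by
            rw [real_inner_comm]; exact hle y ξs hξS
          have h2 : (inner ℝ ξs x : ℝ) = H0 x := by rw [real_inner_comm]; exact hξeq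
          rw [h2]
          linarith
        have hgd : DifferentiableAt ℝ g x :=
          hdiff.sub (innerSL ℝ ξs).differentiableAt
        have h0' : fderiv ℝ g x = 0 := hgmin.fderiv_eq_zero
        have : fderiv ℝ g x = fderiv ℝ H0 x - innerSL ℝ ξs := by
          rw [hg]
          rw [fderiv_fun_sub hdiff (innerSL ℝ ξs).differentiableAt]
          rw [(innerSL ℝ ξs).fderiv]
        rw [this] at h0'
        rw [sub_eq_zero] at h0'
        exact h0'
      -- H ξs = 1
      have hHξs : H ξs = 1 := by
        have hle1 : H ξs ≤ 1 := hξS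
        have hξsne : ξs ≠ 0 := by
          intro h
          rw [h] at hξeq
          simp at hξeq
          rw [← hξeq] at hxpos
          exact lt_irrefl _ hxpos
        have hnpos : 0 < ‖ξs‖ := norm_pos_iff.mpr hξsne
        have hHpos : 0 < H ξs :=
          lt_of_lt_of_le (by positivity : (0:ℝ) < α * ‖ξs‖) (hlow ξs)
        by_contra hne
        have hlt : H ξs < 1 := lt_of_le_of_ne hle1 hne
        have hmem : (H ξs)⁻¹ • ξs ∈ S := by
          simp only [hSdef, mem_setOf_eq]
          rw [hhom, abs_of_nonneg (by positivity)]
          rw [inv_mul_cancel₀ hHpos.ne']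
        have := hle x _ hmem
        rw [real_inner_smul_right, hξeq] at this
        have hgt : 1 < (H ξs)⁻¹ := (one_lt_inv₀ hHpos).mpr hlt
        nlinarith
      -- chain rule
      have hwd : HasDerivAt w (w' (H0 x)) (H0 x) :=
        (hw' (H0 x) ⟨hxpos.le, hxR.le⟩).hasDerivAt (Icc_mem_nhds hxpos hxR)
      have hH0fd : HasFDerivAt H0 (innerSL ℝ ξs) x := by
        rw [← hfderiv]
        exact hdiff.hasFDerivAt
      have hvfd : HasFDerivAt v (w' (H0 x) • innerSL ℝ ξs) x := by
        rw [hveq]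
        exact hwd.comp_hasFDerivAt x hH0fd
      have hvgrad : HasGradientAt v (w' (H0 x) • ξs) x := by
        rw [hasGradientAt_iff_hasFDerivAt]
        refine hvfd.congr_fderiv ?_
        ext y
        simp [InnerProductSpace.toDual_apply_apply, innerSL_apply_apply, inner_smul_left,
          real_inner_smul_left]
      have hDveq : Dv x = w' (H0 x) • ξs := (hgrad hxR).unique hvgrad
      rw [hDveq, hhom, hHξs, mul_one, hWeq (H0 x) ⟨hxpos.le, hxR.le⟩]
    -- apply the coarea formula
    have hmeasset : MeasurableSet {x : EuclideanSpace ℝ (Fin n) | H0 x < R} :=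
      (isOpen_lt hcont0 continuous_const).measurableSet
    rw [setIntegral_congr_ae hmeasset hae]
    have hco := coarea_aux (by omega) H0 hcont0 hhom0 β⁻¹ (by positivity) hlow0
      (fun ρ => W ρ ^ q) hfcont R hR
    rw [hco]
    rw [setIntegral_congr_set (Ioo_ae_eq_Ioc (a := (0:ℝ)) (b := R))]
    rw [intervalIntegral.integral_of_le hR.le]
    rw [setIntegral_congr_fun (g := fun ρ => ((n:ℝ) * κ) * (|w' ρ| ^ q * ρ ^ (n-1)))
      measurableSet_Ioc ?_]
    · rw [MeasureTheory.integral_const_mul]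
    · intro ρ hρ
      simp only
      rw [hWeq ρ ⟨hρ.1.le, hρ.2⟩, ← hκ]
      ring
end
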